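/- arXiv:2007.14665 — 8 statements merged into one kernel-verified Lean document; each statement's English description precedes it below -/
import Mathlib

section
/- For every real s > 0, the Laplace transform of the logarithm satisfies ∫₀^∞ e^{-st} log t dt = -(γ + log s)/s, where γ is the Euler–Mascheroni constant. -/
/-!
The Mellin transform of `e^{-t}` is `Γ`, and differentiating a Mellin transform in `s` multiplies
the integrand by `log t`; hence `∫₀^∞ e^{-t} log t dt = Γ'(1) = -γ`. For general `s > 0`, the
substitution `u = s t` and `log t = log u - log s` reduce to this and to `∫₀^∞ e^{-u} du = 1`.
-/

open MeasureTheory Real Set Filter Asymptotics Topology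

lemma hasMellin_exp_neg_mul_log_one :
    HasMellin (fun t : ℝ => ((exp (-t) * log t : ℝ) : ℂ)) 1
      ((-eulerMascheroniConstant : ℝ) : ℂ) := by
  set f : ℝ → ℂ := fun t => ((exp (-t) : ℝ) : ℂ)
  have hf : Continuous f := by fun_prop
  have hf_top : f =O[atTop] (· ^ (-2 : ℝ)) := by
    rw [← isBigO_norm_left]
    simp_rw [f, Complex.norm_real, isBigO_norm_left]
    simpa only [neg_one_mul] using (isLittleO_exp_neg_mul_rpow_atTop zero_lt_one _).isBigO
  have hf_bot : f =O[𝓝[>] 0] (· ^ (-0 : ℝ)) := by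
    simp_rw [neg_zero, rpow_zero]
    exact isBigO_const_of_tendsto ((hf.tendsto 0).mono_left nhdsWithin_le_nhds) (by simp)
  obtain ⟨hconv, hderiv⟩ := mellin_hasDerivAt_of_isBigO_rpow (s := 1)
    (hf.continuousOn.locallyIntegrableOn measurableSet_Ioi) hf_top (by norm_num) hf_bot
    (by norm_num)
  have hGamma : mellin f =ᶠ[𝓝 1] Complex.Gamma := by
    filter_upwards [(Complex.continuous_re.isOpen_preimage _ isOpen_Ioi).mem_nhds
      (show (1 : ℂ) ∈ Complex.re ⁻¹' Ioi 0 by simp)] with z hz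
    rw [← Complex.GammaIntegral_eq_mellin, Complex.Gamma_eq_integral hz]
  have hval := (hderiv.congr_of_eventuallyEq hGamma.symm).unique Complex.hasDerivAt_Gamma_one
  simp only [f, Complex.real_smul, ← Complex.ofReal_mul, mul_comm (log _)] at hconv hval
  exact ⟨hconv, by rw [hval, Complex.ofReal_neg]⟩

lemma HasMellin.integrableOn_and_integral_eq_of_one {g : ℝ → ℝ} {m : ℝ}
    (h : HasMellin (fun t => (g t : ℂ)) 1 m) :
    IntegrableOn g (Ioi 0) ∧ ∫ t in Ioi 0, g t = m := by
  obtain ⟨hconv, hval⟩ := h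
  simp only [MellinConvergent, mellin, sub_self, Complex.cpow_zero, one_smul] at hconv hval
  rw [integral_complex_ofReal, Complex.ofReal_inj] at hval
  exact ⟨by simpa [IntegrableOn] using hconv.re, hval⟩

/-- For every real `s > 0`, the Laplace transform of the logarithm satisfies
`∫₀^∞ e^{-st} log t dt = -(γ + log s)/s`, where `γ` is the Euler–Mascheroni constant. -/
theorem stmt2 (s : ℝ) (hs : 0 < s) :
    ∫ t in Set.Ioi (0:ℝ), Real.exp (-(s * t)) * Real.log t
      = -((Real.eulerMascheroniConstant + Real.log s) / s) := by
  obtain ⟨hint, hval⟩ := hasMellin_exp_neg_mul_log_one.integrableOn_and_integral_eq_of_one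
  calc ∫ t in Ioi 0, exp (-(s * t)) * log t
      = ∫ t in Ioi 0, exp (-(s * t)) * log (s * t) - log s * exp (-(s * t)) := by
        refine setIntegral_congr_fun measurableSet_Ioi fun t ht => ?_
        rw [log_mul hs.ne' (ne_of_gt ht)]
        ring
    _ = s⁻¹ * ∫ u in Ioi 0, exp (-u) * log u - log s * exp (-u) := by
        rw [integral_comp_mul_left_Ioi (fun u => exp (-u) * log u - log s * exp (-u)) 0 hs,
          mul_zero, smul_eq_mul]
    _ = s⁻¹ * (-eulerMascheroniConstant - log s) := by
        rw [integral_sub hint ((integrableOn_exp_neg_Ioi 0).const_mul _), integral_const_mul,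
          hval, integral_exp_neg_Ioi_zero, mul_one]
    _ = -((eulerMascheroniConstant + log s) / s) := by ring
end

section
/- Let r > 0 and let f ∈ C¹([0,r];ℝ) satisfy f(0) = 0. If T[f](x) = -(1/(8π²)) ∫₀ˣ f'(y) log(x-y) dy vanishes for every x ∈ [0,r], then f vanishes identically on [0,r]. In other words, T is injective on the set D = { f ∈ C¹([0,r]) : f(0) = 0 }. -/
/-!
Write `T₀ g (x) = ∫₀ˣ g(y) log(x - y) dy` and `Δ_u(s) = triangle u s = max (u - |s|) 0`.

If `T₀ g = 0` on `[0, a]`, the log-energy `∫∫_{[0,a]²} g(x) g(y) log|x - y|` vanishes: cut along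
the diagonal, each half is `∫ g(x) T₀ g(x) dx = 0`. On the other hand, for `0 < |s| ≤ 1`,
`-log |s| = ∫₀¹ Δ_u(s) u⁻² du + Δ_1(s)`, and every `Δ_u` is a positive definite kernel, being the
autocorrelation `∫ 1_{[x-u,x]}(t) 1_{[y-u,y]}(t) dt` of an indicator. So when `a ≤ 1` the
`Δ_1`-energy `∫ (∫_{[0,a] ∩ [t,t+1]} g)² dt` vanishes too, whence `∫_t^a g = 0` for all
`t ∈ [0, a]` and `g = 0` on `[0, a]`.

The equation is causal: once `g = 0` on `[0, s)`, the equation at `s + x` is the same equation for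
`g (s + ·)` at `x`, so steps of length at most one cover `[0, r]`. For `g = f'` this gives `f' = 0`
on `[0, r]`, hence `f = f 0 = 0`.
-/

open MeasureTheory Real Set Filter

noncomputable section

def triangle (u s : ℝ) : ℝ := max (u - |s|) 0

def window (u x t : ℝ) : ℝ := (Icc (x - u) x).indicator 1 t

def kernelEnergy (μ : Measure ℝ) (K : ℝ → ℝ) (g : ℝ → ℝ) : ℝ :=
  ∫ p, g p.1 * g p.2 * K (p.1 - p.2) ∂μ.prod μ

lemma triangle_nonneg (u s : ℝ) : 0 ≤ triangle u s := le_max_right _ _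

lemma triangle_of_abs_le {u s : ℝ} (h : |s| ≤ u) : triangle u s = u - |s| :=
  max_eq_left (sub_nonneg.2 h)

lemma triangle_of_le_abs {u s : ℝ} (h : u ≤ |s|) : triangle u s = 0 :=
  max_eq_right (sub_nonpos.2 h)

lemma continuous_uncurry_triangle : Continuous (Function.uncurry triangle) :=
  (continuous_fst.sub continuous_snd.abs).max continuous_const

lemma window_nonneg (u x t : ℝ) : 0 ≤ window u x t :=
  indicator_nonneg (fun _ _ => zero_le_one) t

lemma window_le_one (u x t : ℝ) : window u x t ≤ 1 :=
  indicator_le_self' (fun _ _ => zero_le_one) t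

lemma measurable_uncurry_window (u : ℝ) : Measurable (Function.uncurry (window u)) := by
  have hS : MeasurableSet {q : ℝ × ℝ | q.1 - u ≤ q.2 ∧ q.2 ≤ q.1} :=
    (measurableSet_le (measurable_fst.sub_const u) measurable_snd).inter
      (measurableSet_le measurable_snd measurable_fst)
  convert (measurable_const (a := (1 : ℝ))).indicator hS using 1
  ext q
  simp [Function.uncurry, window, indicator_apply]

lemma integrable_window (u x : ℝ) : Integrable (window u x) := by
  unfold window
  exact (integrable_indicator_iff measurableSet_Icc).2 (integrableOn_const (by simp))

lemma measurable_window (u x : ℝ) : Measurable (window u x) :=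
  measurable_one.indicator measurableSet_Icc

lemma integral_window_mul_window (u x y : ℝ) :
    ∫ t, window u x t * window u y t = triangle u (x - y) := by
  have hmul : ∀ t, window u x t * window u y t
      = (Icc (max (x - u) (y - u)) (min x y)).indicator 1 t := by
    intro t
    rw [← Icc_inter_Icc, window, window, ← Pi.mul_apply, ← inter_indicator_one]
  have hlen : min x y - max (x - u) (y - u) = u - |x - y| := by
    rcases le_total x y with h | h
    · rw [min_eq_left h, max_eq_right (by linarith), abs_of_nonpos (by linarith)]; ring
    · rw [min_eq_right h, max_eq_left (by linarith), abs_of_nonneg (by linarith)]; ring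
  simp_rw [hmul, integral_indicator_one measurableSet_Icc, Real.volume_real_Icc, hlen]
  rfl

section PositiveDefinite

variable {μ : Measure ℝ} {g : ℝ → ℝ}

lemma integrable_mul_triangle (hg : Integrable g μ) (u : ℝ) :
    Integrable (fun p : ℝ × ℝ => g p.1 * g p.2 * triangle u (p.1 - p.2)) (μ.prod μ) := by
  refine (hg.mul_prod hg).mul_bdd (c := |u|)
    (continuous_uncurry_triangle.comp (continuous_const.prodMk
      (continuous_fst.sub continuous_snd))).aestronglyMeasurable (Eventually.of_forall fun p => ?_)
  rw [norm_of_nonneg (triangle_nonneg _ _)]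
  exact max_le (by linarith [le_abs_self u, abs_nonneg (p.1 - p.2)]) (abs_nonneg u)

lemma integrable_mul_window_mul_window (hg : Integrable g μ) (u : ℝ) :
    Integrable
      (fun q : (ℝ × ℝ) × ℝ => g q.1.1 * g q.1.2 * (window u q.1.1 q.2 * window u q.1.2 q.2))
      ((μ.prod μ).prod volume) := by
  have hmeas : AEStronglyMeasurable
      (fun q : (ℝ × ℝ) × ℝ => g q.1.1 * g q.1.2 * (window u q.1.1 q.2 * window u q.1.2 q.2))
      ((μ.prod μ).prod volume) :=
    (hg.1.comp_fst.comp_fst.mul hg.1.comp_snd.comp_fst).mul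
      (((measurable_uncurry_window u).comp (measurable_fst.fst.prodMk measurable_snd)).mul
        ((measurable_uncurry_window u).comp
          (measurable_fst.snd.prodMk measurable_snd))).aestronglyMeasurable
  rw [integrable_prod_iff hmeas]
  refine ⟨Eventually.of_forall fun p => ?_, ?_⟩
  · refine ((integrable_window u p.1).mul_bdd (c := 1)
      (measurable_window u p.2).aestronglyMeasurable
      (Eventually.of_forall fun t => ?_)).const_mul (g p.1 * g p.2)
    rw [norm_of_nonneg (window_nonneg _ _ _)]
    exact window_le_one _ _ _
  · refine (integrable_mul_triangle hg u).norm.congr (Eventually.of_forall fun p => ?_)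
    simp only [norm_mul, norm_of_nonneg (window_nonneg _ _ _), norm_of_nonneg (triangle_nonneg _ _)]
    rw [integral_const_mul, integral_window_mul_window]

variable [SFinite μ]

lemma sq_integral_mul_window (u t : ℝ) :
    (∫ x, g x * window u x t ∂μ) ^ 2
      = ∫ p : ℝ × ℝ, g p.1 * g p.2 * (window u p.1 t * window u p.2 t) ∂μ.prod μ := by
  rw [sq, ← integral_prod_mul]
  congr 1; ext p; ring

lemma kernelEnergy_triangle_eq_integral_sq (hg : Integrable g μ) (u : ℝ) :
    kernelEnergy μ (triangle u) g = ∫ t, (∫ x, g x * window u x t ∂μ) ^ 2 := by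
  calc kernelEnergy μ (triangle u) g
      = ∫ p : ℝ × ℝ, (∫ t, g p.1 * g p.2 * (window u p.1 t * window u p.2 t)) ∂μ.prod μ := by
        simp only [kernelEnergy, integral_const_mul, integral_window_mul_window]
    _ = ∫ t, ∫ p : ℝ × ℝ, g p.1 * g p.2 * (window u p.1 t * window u p.2 t) ∂μ.prod μ :=
        integral_integral_swap (integrable_mul_window_mul_window hg u)
    _ = ∫ t, (∫ x, g x * window u x t ∂μ) ^ 2 := by simp only [sq_integral_mul_window]

lemma integrable_sq_integral_mul_window (hg : Integrable g μ) (u : ℝ) :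
    Integrable fun t => (∫ x, g x * window u x t ∂μ) ^ 2 := by
  simpa only [sq_integral_mul_window] using
    (integrable_mul_window_mul_window hg u).integral_prod_right

lemma kernelEnergy_triangle_nonneg (hg : Integrable g μ) (u : ℝ) :
    0 ≤ kernelEnergy μ (triangle u) g := by
  rw [kernelEnergy_triangle_eq_integral_sq hg u]
  exact integral_nonneg fun t => sq_nonneg _

end PositiveDefinite

lemma continuousOn_triangle_div_sq (s : ℝ) : ContinuousOn (fun u => triangle u s / u ^ 2) (Ioi 0) :=
  (continuous_uncurry_triangle.comp (continuous_id.prodMk continuous_const)).continuousOn.div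
    (continuous_pow 2).continuousOn fun _ hu => pow_ne_zero 2 (ne_of_gt hu)

lemma intervalIntegrable_triangle_div_sq_of_pos {s a b : ℝ} (ha : 0 < a) (hb : 0 < b) :
    IntervalIntegrable (fun u => triangle u s / u ^ 2) volume a b :=
  ((continuousOn_triangle_div_sq s).mono fun _ hu =>
    lt_of_lt_of_le (lt_min ha hb) hu.1).intervalIntegrable

lemma triangle_div_sq_eqOn_zero (s : ℝ) : EqOn (fun u => triangle u s / u ^ 2) 0 (Iic |s|) :=
  fun u hu => by simp [triangle_of_le_abs (show u ≤ |s| from hu)]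

lemma intervalIntegrable_triangle_div_sq_of_le_abs {s a b : ℝ} (ha : a ≤ |s|) (hb : b ≤ |s|) :
    IntervalIntegrable (fun u => triangle u s / u ^ 2) volume a b :=
  intervalIntegrable_const.congr fun _ hu =>
    ((triangle_div_sq_eqOn_zero s) (le_trans hu.2 (max_le ha hb))).symm

lemma intervalIntegrable_triangle_div_sq {s : ℝ} (hs : s ≠ 0) :
    IntervalIntegrable (fun u => triangle u s / u ^ 2) volume 0 1 :=
  (intervalIntegrable_triangle_div_sq_of_le_abs (abs_nonneg s) le_rfl).trans
    (intervalIntegrable_triangle_div_sq_of_pos (abs_pos.2 hs) one_pos)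

lemma integral_triangle_div_sq {s : ℝ} (hs : s ≠ 0) (hs1 : |s| ≤ 1) :
    ∫ u in Ioc 0 1, triangle u s / u ^ 2 = -log s - triangle 1 s := by
  have hs' : 0 < |s| := abs_pos.2 hs
  have hbelow : ∫ u in (0)..|s|, triangle u s / u ^ 2 = 0 := by
    rw [intervalIntegral.integral_congr ((triangle_div_sq_eqOn_zero s).mono
      (uIcc_of_le hs'.le ▸ Icc_subset_Iic_self))]
    simp
  have habove : ∫ u in |s|..1, triangle u s / u ^ 2
      = (log 1 + |s| * 1⁻¹) - (log |s| + |s| * |s|⁻¹) := by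
    refine intervalIntegral.integral_eq_sub_of_hasDerivAt (f := fun u => log u + |s| * u⁻¹)
      (fun u hu => ?_)
      (intervalIntegrable_triangle_div_sq_of_pos hs' one_pos)
    rw [uIcc_of_le hs1] at hu
    have hu0 : 0 < u := hs'.trans_le hu.1
    refine ((hasDerivAt_log hu0.ne').add ((hasDerivAt_inv hu0.ne').const_mul |s|)).congr_deriv ?_
    rw [triangle_of_abs_le hu.1]; field_simp; ring
  rw [← intervalIntegral.integral_of_le zero_le_one,
    ← intervalIntegral.integral_add_adjacent_intervals
    (intervalIntegrable_triangle_div_sq_of_le_abs (abs_nonneg s) le_rfl)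
    (intervalIntegrable_triangle_div_sq_of_pos hs' one_pos), hbelow, habove,
    triangle_of_abs_le hs1, ← log_abs s, log_one, mul_inv_cancel₀ hs'.ne']
  ring

lemma ae_prod_fst_ne_snd {μ : Measure ℝ} [SFinite μ] [NullSingletonClass μ] :
    ∀ᵐ p ∂μ.prod μ, p.1 ≠ p.2 :=
  (Measure.ae_prod_iff_ae_ae (measurableSet_eq_fun measurable_fst measurable_snd).compl).2
    (Eventually.of_forall fun x => (μ.ae_ne x).mono fun _ h => Ne.symm h)

lemma kernelEnergy_integral_triangle_div_sq_nonneg {μ : Measure ℝ} [SFinite μ]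
    [NullSingletonClass μ] {g : ℝ → ℝ} (hg : Integrable g μ)
    (hκ : Integrable
      (fun p : ℝ × ℝ => g p.1 * g p.2 * ∫ u in Ioc 0 1, triangle u (p.1 - p.2) / u ^ 2)
      (μ.prod μ)) :
    0 ≤ kernelEnergy μ (fun s => ∫ u in Ioc 0 1, triangle u s / u ^ 2) g := by
  have hmeas : AEStronglyMeasurable
      (fun q : (ℝ × ℝ) × ℝ => g q.1.1 * g q.1.2 * (triangle q.2 (q.1.1 - q.1.2) / q.2 ^ 2))
      ((μ.prod μ).prod (volume.restrict (Ioc 0 1))) :=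
    (hg.1.comp_fst.comp_fst.mul hg.1.comp_snd.comp_fst).mul
      (((continuous_uncurry_triangle.comp (continuous_snd.prodMk
        (continuous_fst.fst.sub continuous_fst.snd))).measurable.div
        (measurable_snd.pow_const 2)).aestronglyMeasurable)
  have hint : Integrable
      (fun q : (ℝ × ℝ) × ℝ => g q.1.1 * g q.1.2 * (triangle q.2 (q.1.1 - q.1.2) / q.2 ^ 2))
      ((μ.prod μ).prod (volume.restrict (Ioc 0 1))) := by
    rw [integrable_prod_iff hmeas]
    refine ⟨?_, hκ.norm.congr (Eventually.of_forall fun p => ?_)⟩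
    · filter_upwards [ae_prod_fst_ne_snd] with p hp
      exact ((intervalIntegrable_iff_integrableOn_Ioc_of_le zero_le_one).1
        (intervalIntegrable_triangle_div_sq (sub_ne_zero.2 hp))).const_mul _
    · have hnn : ∀ u : ℝ, 0 ≤ triangle u (p.1 - p.2) / u ^ 2 := fun u =>
        div_nonneg (triangle_nonneg _ _) (sq_nonneg _)
      simp only [norm_mul, norm_of_nonneg (hnn _), norm_of_nonneg (integral_nonneg hnn)]
      rw [integral_const_mul]
  calc 0 ≤ ∫ u in Ioc 0 1, kernelEnergy μ (triangle u) g / u ^ 2 :=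
        integral_nonneg fun u => div_nonneg (kernelEnergy_triangle_nonneg hg u) (sq_nonneg u)
    _ = ∫ u in Ioc 0 1,
          ∫ p : ℝ × ℝ, g p.1 * g p.2 * (triangle u (p.1 - p.2) / u ^ 2) ∂μ.prod μ := by
        simp only [kernelEnergy, ← integral_div, mul_div_assoc]
    _ = ∫ p : ℝ × ℝ, (∫ u in Ioc 0 1, g p.1 * g p.2 * (triangle u (p.1 - p.2) / u ^ 2)) ∂μ.prod μ :=
        (integral_integral_swap hint).symm
    _ = kernelEnergy μ (fun s => ∫ u in Ioc 0 1, triangle u s / u ^ 2) g := by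
        simp only [kernelEnergy, integral_const_mul]

lemma intervalIntegrable_log_sub (c a b : ℝ) :
    IntervalIntegrable (fun y => log (c - y)) volume a b := by
  simpa using (intervalIntegral.intervalIntegrable_log' (a := c - a) (b := c - b)).comp_sub_left c

lemma integrableOn_log_sub (c a b : ℝ) : IntegrableOn (fun y => log (c - y)) (Icc a b) :=
  ((intervalIntegrable_iff').1 (intervalIntegrable_log_sub c a b)).mono_set Icc_subset_uIcc

section LogEnergy

variable {a b : ℝ}

lemma integral_abs_log_sub_le {x : ℝ} (hx : x ∈ Icc a b) :
    ∫ y in Icc a b, |log (x - y)| ≤ ∫ t in (a - b)..(b - a), |log t| := by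
  have hab : a ≤ b := hx.1.trans hx.2
  rw [integral_Icc_eq_integral_Ioc, ← intervalIntegral.integral_of_le hab,
    intervalIntegral.integral_comp_sub_left (fun t => |log t|) x]
  exact intervalIntegral.integral_mono_interval (by linarith [hx.1]) (by linarith)
    (by linarith [hx.2]) (Eventually.of_forall fun t => abs_nonneg _)
    intervalIntegral.intervalIntegrable_log'.abs

lemma integrable_log_sub_prod :
    Integrable (fun p : ℝ × ℝ => log (p.1 - p.2))
      ((volume.restrict (Icc a b)).prod (volume.restrict (Icc a b))) := by
  have hmeas : AEStronglyMeasurable (fun p : ℝ × ℝ => log (p.1 - p.2))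
      ((volume.restrict (Icc a b)).prod (volume.restrict (Icc a b))) :=
    (measurable_log.comp (measurable_fst.sub measurable_snd)).aestronglyMeasurable
  rw [integrable_prod_iff hmeas]
  refine ⟨Eventually.of_forall fun x => integrableOn_log_sub x a b, ?_⟩
  refine (integrable_const (∫ t in (a - b)..(b - a), |log t|)).mono'
    hmeas.norm.integral_prod_right' ?_
  filter_upwards [ae_restrict_mem measurableSet_Icc] with x hx
  rw [norm_of_nonneg (integral_nonneg fun _ => norm_nonneg _)]
  exact integral_abs_log_sub_le hx

lemma integrable_mul_log_sub_prod {g : ℝ → ℝ} {C : ℝ}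
    (hg : AEStronglyMeasurable g (volume.restrict (Icc a b))) (hC : ∀ x ∈ Icc a b, ‖g x‖ ≤ C) :
    Integrable (fun p : ℝ × ℝ => g p.1 * g p.2 * log (p.1 - p.2))
      ((volume.restrict (Icc a b)).prod (volume.restrict (Icc a b))) := by
  refine integrable_log_sub_prod.bdd_mul (c := C * C) (hg.comp_fst.mul hg.comp_snd) ?_
  rw [Measure.prod_restrict]
  filter_upwards [ae_restrict_mem (measurableSet_Icc.prod measurableSet_Icc)] with p hp
  rw [norm_mul]
  exact mul_le_mul (hC _ hp.1) (hC _ hp.2) (norm_nonneg _) ((abs_nonneg _).trans (hC _ hp.1))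

lemma kernelEnergy_triangle_one_le_neg_kernelEnergy_log {g : ℝ → ℝ} (hab : b - a ≤ 1)
    (hg : Integrable g (volume.restrict (Icc a b)))
    (hlog : Integrable (fun p : ℝ × ℝ => g p.1 * g p.2 * log (p.1 - p.2))
      ((volume.restrict (Icc a b)).prod (volume.restrict (Icc a b)))) :
    kernelEnergy (volume.restrict (Icc a b)) (triangle 1) g
      ≤ -kernelEnergy (volume.restrict (Icc a b)) log g := by
  set μ := volume.restrict (Icc a b)
  set κ : ℝ → ℝ := fun s => ∫ u in Ioc 0 1, triangle u s / u ^ 2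
  have hsplit : ∀ᵐ p ∂μ.prod μ, g p.1 * g p.2 * log (p.1 - p.2)
      = -(g p.1 * g p.2 * κ (p.1 - p.2)) - g p.1 * g p.2 * triangle 1 (p.1 - p.2) := by
    have hbox : ∀ᵐ p ∂μ.prod μ, p ∈ Icc a b ×ˢ Icc a b := by
      rw [Measure.prod_restrict]
      exact ae_restrict_mem (measurableSet_Icc.prod measurableSet_Icc)
    filter_upwards [hbox, ae_prod_fst_ne_snd] with p hp hne
    have hp1 : |p.1 - p.2| ≤ 1 :=
      (abs_sub_le_iff.2 ⟨by linarith [hp.1.2, hp.2.1], by linarith [hp.1.1, hp.2.2]⟩).trans hab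
    simp only [κ, integral_triangle_div_sq (sub_ne_zero.2 hne) hp1]
    ring
  have htri := integrable_mul_triangle hg 1
  have hκ : Integrable (fun p : ℝ × ℝ => g p.1 * g p.2 * κ (p.1 - p.2)) (μ.prod μ) :=
    (hlog.neg.sub htri).congr <| hsplit.mono fun p hp => by
      simp only [Pi.sub_apply, Pi.neg_apply, hp]
      ring
  have hlog_eq : kernelEnergy μ log g = -kernelEnergy μ κ g - kernelEnergy μ (triangle 1) g := by
    rw [kernelEnergy, integral_congr_ae hsplit, integral_sub (by exact hκ.neg) htri, integral_neg]
    rfl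
  linarith [kernelEnergy_integral_triangle_div_sq_nonneg hg hκ]

end LogEnergy

lemma kernelEnergy_log_eq_zero {a : ℝ} {g : ℝ → ℝ}
    (hlog : Integrable (fun p : ℝ × ℝ => g p.1 * g p.2 * log (p.1 - p.2))
      ((volume.restrict (Icc 0 a)).prod (volume.restrict (Icc 0 a))))
    (H : ∀ x ∈ Icc 0 a, ∫ y in 0..x, g y * log (x - y) = 0) :
    kernelEnergy (volume.restrict (Icc 0 a)) log g = 0 := by
  set μ := volume.restrict (Icc 0 a)
  set F : ℝ × ℝ → ℝ := fun p => g p.1 * g p.2 * log (p.1 - p.2)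
  set S : Set (ℝ × ℝ) := {p | p.2 < p.1}
  have hS : MeasurableSet S := measurableSet_lt measurable_snd measurable_fst
  -- `F` is symmetric, and vanishes on the diagonal because `log 0 = 0`.
  have hF : ∀ p, F p = S.indicator F p + S.indicator F p.swap := by
    rintro ⟨x, y⟩
    rcases lt_trichotomy x y with h | rfl | h
    · simp [F, S, h, h.not_gt, ← log_neg_eq_log (x - y), mul_comm (g x)]
    · simp [F, S]
    · simp [F, S, h, h.not_gt]
  have hlower : ∫ p, S.indicator F p ∂μ.prod μ = 0 := by
    rw [integral_prod _ (hlog.indicator hS)]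
    refine integral_eq_zero_of_ae ?_
    filter_upwards [ae_restrict_mem measurableSet_Icc] with x hx
    have hslice : (fun y => S.indicator F (x, y))
        = (Iio x).indicator fun y => g x * (g y * log (x - y)) := by
      ext y
      simp [F, S, indicator_apply, mul_assoc]
    have hIco : Iio x ∩ Icc 0 a = Ico 0 x := by
      ext y
      simp only [mem_inter_iff, mem_Iio, mem_Icc, mem_Ico]
      constructor
      · rintro ⟨h1, h2, -⟩; exact ⟨h2, h1⟩
      · rintro ⟨h1, h2⟩; exact ⟨h2, h1, h2.le.trans hx.2⟩
    rw [Pi.zero_apply, hslice, integral_indicator measurableSet_Iio,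
      Measure.restrict_restrict measurableSet_Iio, hIco, integral_const_mul,
      integral_Ico_eq_integral_Ioo, ← integral_Ioc_eq_integral_Ioo,
      ← intervalIntegral.integral_of_le hx.1, H x hx, mul_zero]
  calc kernelEnergy μ log g
      = ∫ p, S.indicator F p + S.indicator F p.swap ∂μ.prod μ := integral_congr_ae
        (Eventually.of_forall hF)
    _ = 0 := by
      rw [integral_add (hlog.indicator hS) (by exact (hlog.indicator hS).swap),
        integral_prod_swap, hlower, add_zero]

lemma eqOn_zero_of_ae_integral_eq_zero {g : ℝ → ℝ} {a b : ℝ} (hg : Continuous g) (hab : a < b)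
    (H : ∀ᵐ t ∂volume.restrict (Icc a b), ∫ x in t..b, g x = 0) : EqOn g 0 (Icc a b) := by
  have hderiv : ∀ t, HasDerivAt (fun t => ∫ x in t..b, g x) (-g t) t := fun t =>
    intervalIntegral.integral_hasDerivAt_left (hg.intervalIntegrable _ _)
      (hg.stronglyMeasurableAtFilter _ _) hg.continuousAt
  have hzero : EqOn (fun t => ∫ x in t..b, g x) 0 (Icc a b) :=
    Measure.eqOn_Icc_of_ae_eq volume hab.ne H
      (continuous_iff_continuousAt.2 fun t => (hderiv t).continuousAt).continuousOn
      continuousOn_const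
  intro x hx
  have hconst : HasDerivWithinAt (fun t => ∫ x in t..b, g x) 0 (Icc a b) x :=
    (hasDerivWithinAt_const x _ (0 : ℝ)).congr (fun t ht => hzero ht) (hzero hx)
  simpa using (uniqueDiffOn_Icc hab x hx).eq_deriv _ (hderiv x).hasDerivWithinAt hconst

lemma setIntegral_mul_window_one {g : ℝ → ℝ} {a t : ℝ} (ha1 : a ≤ 1) (ht : t ∈ Icc 0 a) :
    ∫ x in Icc 0 a, g x * window 1 x t = ∫ x in t..a, g x := by
  have hwin : EqOn (fun x => g x * window 1 x t) ((Ici t).indicator g) (Icc 0 a) := by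
    intro x hx
    have : x - 1 ≤ t := by linarith [hx.2, ht.1]
    by_cases htx : t ≤ x <;> simp [window, htx, this]
  have hinter : Ici t ∩ Icc 0 a = Icc t a := by
    ext x
    simp only [mem_inter_iff, mem_Ici, mem_Icc]
    exact ⟨fun h => ⟨h.1, h.2.2⟩, fun h => ⟨h.1, ht.1.trans h.1, h.2⟩⟩
  rw [setIntegral_congr_fun measurableSet_Icc hwin, integral_indicator measurableSet_Ici,
    Measure.restrict_restrict measurableSet_Ici, hinter,
    integral_Icc_eq_integral_Ioc, ← intervalIntegral.integral_of_le ht.2]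

theorem eqOn_zero_of_integral_mul_log_eq_zero_of_le_one {a : ℝ} {g : ℝ → ℝ} (ha : 0 < a)
    (ha1 : a ≤ 1) (hg : Continuous g) (H : ∀ x ∈ Icc 0 a, ∫ y in 0..x, g y * log (x - y) = 0) :
    EqOn g 0 (Icc 0 a) := by
  set μ := volume.restrict (Icc 0 a)
  obtain ⟨C, hC⟩ := isCompact_Icc.exists_bound_of_continuousOn hg.continuousOn
  have hgi : Integrable g μ := hg.integrableOn_Icc
  have hlog := integrable_mul_log_sub_prod hg.aestronglyMeasurable hC
  have hE : kernelEnergy μ (triangle 1) g = 0 :=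
    le_antisymm
      (by simpa [kernelEnergy_log_eq_zero hlog H] using
        kernelEnergy_triangle_one_le_neg_kernelEnergy_log (by linarith) hgi hlog)
      (kernelEnergy_triangle_nonneg hgi 1)
  rw [kernelEnergy_triangle_eq_integral_sq hgi,
    integral_eq_zero_iff_of_nonneg (fun t => sq_nonneg _)
      (integrable_sq_integral_mul_window hgi 1)] at hE
  refine eqOn_zero_of_ae_integral_eq_zero hg ha ?_
  rw [ae_restrict_iff' measurableSet_Icc]
  filter_upwards [hE] with t ht hmem
  rw [← setIntegral_mul_window_one ha1 hmem]
  exact pow_eq_zero_iff two_ne_zero |>.1 ht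

lemma eq_zero_of_le_add_one_of_integral_mul_log_eq_zero {r s : ℝ} {g : ℝ → ℝ} (hg : Continuous g)
    (H : ∀ x ∈ Icc 0 r, ∫ y in 0..x, g y * log (x - y) = 0) (hs : s ∈ Ico 0 r)
    (hprev : ∀ y ∈ Icc 0 r, y < s → g y = 0) : ∀ y ∈ Icc 0 r, y ≤ s + 1 → g y = 0 := by
  set a := min 1 (r - s)
  have ha : 0 < a := lt_min one_pos (sub_pos.2 hs.2)
  have hshift : ∀ x ∈ Icc 0 a, ∫ y in 0..x, g (s + y) * log (x - y) = 0 := by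
    intro x hx
    have hxr : s + x ∈ Icc 0 r :=
      ⟨by linarith [hs.1, hx.1], by linarith [hx.2, min_le_right 1 (r - s)]⟩
    have hint : ∀ c, IntervalIntegrable (fun z => g z * log (s + x - z)) volume 0 c := fun c =>
      (intervalIntegrable_log_sub _ _ _).continuousOn_mul hg.continuousOn
    have hbefore : ∫ z in 0..s, g z * log (s + x - z) = 0 := by
      refine intervalIntegral.integral_zero_ae ?_
      filter_upwards [Measure.ae_ne volume s] with z hzs hz
      rw [uIoc_of_le hs.1] at hz
      rw [hprev z ⟨hz.1.le, hz.2.trans hs.2.le⟩ (lt_of_le_of_ne hz.2 hzs), zero_mul]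
    calc ∫ y in 0..x, g (s + y) * log (x - y)
        = ∫ z in s + 0..s + x, g z * log (s + x - z) := by
          simp only [← intervalIntegral.integral_comp_add_left, add_sub_add_left_eq_sub]
      _ = 0 := by
          rw [add_zero, ← intervalIntegral.integral_interval_sub_left (hint _) (hint _), H _ hxr,
            hbefore, sub_zero]
  have hlocal := eqOn_zero_of_integral_mul_log_eq_zero_of_le_one ha (min_le_left _ _)
    (hg.comp (continuous_const_add s)) hshift
  intro y hy hys
  rcases lt_or_ge y s with hlt | hge
  · exact hprev y hy hlt
  · simpa using hlocal (x := y - s) ⟨sub_nonneg.2 hge, le_min (by linarith) (by linarith [hy.2])⟩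

theorem eqOn_zero_of_integral_mul_log_eq_zero {r : ℝ} {g : ℝ → ℝ} (hr : 0 < r) (hg : Continuous g)
    (H : ∀ x ∈ Icc 0 r, ∫ y in 0..x, g y * log (x - y) = 0) : EqOn g 0 (Icc 0 r) := by
  have hstep := fun {s} => eq_zero_of_le_add_one_of_integral_mul_log_eq_zero (s := s) hg H
  have hn : ∀ n : ℕ, ∀ y ∈ Icc 0 r, y ≤ n → g y = 0 := by
    intro n
    induction n with
    | zero =>
      exact fun y hy hy0 => hstep ⟨le_rfl, hr⟩ (fun z hz hz0 => absurd hz.1 (not_le.2 hz0)) y hy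
        (by push_cast at hy0; linarith)
    | succ n ih =>
      intro y hy hyn
      rcases lt_or_ge (n : ℝ) r with hnr | hrn
      · exact hstep ⟨n.cast_nonneg, hnr⟩ (fun z hz hzn => ih z hz hzn.le) y hy
          (by exact_mod_cast hyn)
      · exact ih y hy (hy.2.trans hrn)
  intro x hx
  exact hn ⌈r⌉₊ x hx (hx.2.trans (Nat.le_ceil r))

end

/-- Let `r > 0` and `f ∈ C¹([0,r];ℝ)` with `f(0) = 0`. If
`T[f](x) = -(1/(8π²)) ∫₀ˣ f'(y) log(x-y) dy` vanishes for every `x ∈ [0,r]`, then `f`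
vanishes identically on `[0,r]`; i.e. `T` is injective on `{f ∈ C¹([0,r]) : f(0) = 0}`. -/
theorem stmt4 (r : ℝ) (hr : 0 < r) (f f' : ℝ → ℝ)
    (hf : ∀ y ∈ Set.Icc (0:ℝ) r, HasDerivWithinAt f (f' y) (Set.Icc (0:ℝ) r) y)
    (hf' : ContinuousOn f' (Set.Icc (0:ℝ) r))
    (h0 : f 0 = 0)
    (hT : ∀ x ∈ Set.Icc (0:ℝ) r,
      (-(1 / (8 * Real.pi ^ 2))) * (∫ y in (0:ℝ)..x, f' y * Real.log (x - y)) = 0) :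
    ∀ x ∈ Set.Icc (0:ℝ) r, f x = 0 := by
  set g : ℝ → ℝ := fun x => f' (projIcc 0 r hr.le x)
  have hg : Continuous g :=
    hf'.comp_continuous (continuous_subtype_val.comp continuous_projIcc) fun x =>
      (projIcc 0 r hr.le x).2
  have hgf : EqOn g f' (Icc 0 r) := fun x hx => by simp [g, projIcc_of_mem hr.le hx]
  have hgT : ∀ x ∈ Icc 0 r, ∫ y in 0..x, g y * log (x - y) = 0 := by
    intro x hx
    rw [intervalIntegral.integral_congr (g := fun y => f' y * log (x - y)) fun y hy => by
      rw [uIcc_of_le hx.1] at hy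
      simp only [hgf ⟨hy.1, hy.2.trans hx.2⟩]]
    exact (mul_eq_zero.1 (hT x hx)).resolve_left (neg_ne_zero.2 (by positivity))
  have hf'0 : ∀ y ∈ Icc 0 r, f' y = 0 := fun y hy =>
    hgf hy ▸ eqOn_zero_of_integral_mul_log_eq_zero hr hg hgT hy
  intro x hx
  simpa [h0] using (convex_Icc 0 r).norm_image_sub_le_of_norm_hasDerivWithin_le (C := 0) hf
    (fun y hy => by simp [hf'0 y hy]) (left_mem_Icc.2 hr.le) hx
end

section
/- For every x ≠ 0 the improper integral I(x) = lim_{R→∞} ∫₀^R cos(kx) · (log k)/((log k)² + 1) dk exists and equals the absolutely convergent integral (1/x) ∫₀^∞ sin(kx) · ((log k)² − 1)/( k · ((log k)² + 1)² ) dk; moreover |I(x)| ≤ 2/|x| for all x ≠ 0, and I is continuous on ℝ \ {0}. -/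
/-!
Substituting `l = log k` turns the weight `log k / ((log k)² + 1)` into `ψ l = l / (l² + 1)`,
which tends to `0` at `±∞` and has total variation `∫ |ψ'| = 2` (it falls from `0` to `-1/2`,
rises to `1/2` and falls back to `0`). Integrating `cos (k x) · ψ (log k)` by parts against
`sin (k x) / x` leaves a boundary term `O(ψ (log R))`, which vanishes, and an integral
dominated by `|ψ' (log k)| / k`, whose integral over `(0, ∞)` is `∫ |ψ'| = 2`. The same
domination gives continuity in `x`.
-/

open MeasureTheory Real Set Filter Topology

section LogSubstitution

variable {E : Type*} [NormedAddCommGroup E] [NormedSpace ℝ E]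

theorem integrableOn_Ioi_zero_inv_smul_comp_log_iff (g : ℝ → E) :
    IntegrableOn (fun x ↦ x⁻¹ • g (log x)) (Ioi 0) ↔ Integrable g := by
  rw [← range_exp, ← image_univ, integrableOn_image_iff_integrableOn_abs_deriv_smul
    MeasurableSet.univ (fun x _ ↦ (hasDerivAt_exp x).hasDerivWithinAt) exp_injective.injOn,
    integrableOn_univ]
  simp [abs_of_pos (exp_pos _), smul_smul]

theorem integral_Ioi_zero_inv_smul_comp_log (g : ℝ → E) :
    ∫ x in Ioi 0, x⁻¹ • g (log x) = ∫ y, g y := by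
  rw [← range_exp, ← image_univ, integral_image_eq_integral_abs_deriv_smul MeasurableSet.univ
    (fun x _ ↦ (hasDerivAt_exp x).hasDerivWithinAt) exp_injective.injOn, Measure.restrict_univ]
  simp [abs_of_pos (exp_pos _), smul_smul]

end LogSubstitution

theorem hasDerivAt_div_sq_add_one (l : ℝ) :
    HasDerivAt (fun l : ℝ ↦ l / (l ^ 2 + 1)) ((1 - l ^ 2) / (l ^ 2 + 1) ^ 2) l := by
  have hden : HasDerivAt (fun l : ℝ ↦ l ^ 2 + 1) (2 * l) l := by
    simpa using (hasDerivAt_pow 2 l).add_const 1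
  refine ((hasDerivAt_id' l).div hden (by positivity)).congr_deriv ?_
  ring

theorem tendsto_div_sq_add_one_cocompact :
    Tendsto (fun l : ℝ ↦ l / (l ^ 2 + 1)) (cocompact ℝ) (𝓝 0) := by
  refine squeeze_zero_norm' ?_ (tendsto_inv_atTop_zero.comp tendsto_norm_cocompact_atTop)
  filter_upwards [(tendsto_norm_cocompact_atTop (E := ℝ)).eventually_gt_atTop 0] with l hl
  rw [Real.norm_eq_abs] at hl
  rw [Function.comp_apply, Real.norm_eq_abs, Real.norm_eq_abs, abs_div,
    abs_of_pos (by positivity : (0 : ℝ) < l ^ 2 + 1), div_le_iff₀ (by positivity), ← sq_abs l]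
  field_simp
  linarith

theorem integrable_sub_sq_div_sq_add_one_sq :
    Integrable (fun l : ℝ ↦ (1 - l ^ 2) / (l ^ 2 + 1) ^ 2) := by
  have hcont : Continuous (fun l : ℝ ↦ (1 - l ^ 2) / (l ^ 2 + 1) ^ 2) := by
    fun_prop (disch := intro; positivity)
  refine integrable_inv_one_add_sq.mono' hcont.aestronglyMeasurable (.of_forall fun l ↦ ?_)
  rw [norm_div, Real.norm_eq_abs, norm_pow, Real.norm_eq_abs,
    abs_of_pos (by positivity : (0 : ℝ) < l ^ 2 + 1), div_le_iff₀ (by positivity), abs_le]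
  constructor <;> field_simp <;> nlinarith [sq_nonneg l]

theorem integral_abs_sub_sq_div_sq_add_one_sq :
    ∫ l : ℝ, |(1 - l ^ 2) / (l ^ 2 + 1) ^ 2| = 2 := by
  have hint := integrable_sub_sq_div_sq_add_one_sq
  have hIoc : ∫ l in Ioc (0 : ℝ) 1, |(1 - l ^ 2) / (l ^ 2 + 1) ^ 2| = 1 / 2 := by
    rw [← intervalIntegral.integral_of_le zero_le_one]
    have hpos : EqOn (fun l : ℝ ↦ |(1 - l ^ 2) / (l ^ 2 + 1) ^ 2|)
        (fun l ↦ (1 - l ^ 2) / (l ^ 2 + 1) ^ 2) (uIcc 0 1) := by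
      intro l hl
      rw [uIcc_of_le zero_le_one] at hl
      exact abs_of_nonneg (div_nonneg (by nlinarith [hl.1, hl.2]) (by positivity))
    rw [intervalIntegral.integral_congr hpos, intervalIntegral.integral_eq_sub_of_hasDerivAt
      (fun l _ ↦ hasDerivAt_div_sq_add_one l) hint.intervalIntegrable]
    norm_num
  have hIoi : ∫ l in Ioi (1 : ℝ), |(1 - l ^ 2) / (l ^ 2 + 1) ^ 2| = 1 / 2 := by
    have hneg : EqOn (fun l : ℝ ↦ |(1 - l ^ 2) / (l ^ 2 + 1) ^ 2|)
        (fun l ↦ -((1 - l ^ 2) / (l ^ 2 + 1) ^ 2)) (Ioi 1) := by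
      intro l hl
      exact abs_of_nonpos (div_nonpos_of_nonpos_of_nonneg (by nlinarith [hl.out]) (by positivity))
    rw [setIntegral_congr_fun measurableSet_Ioi hneg, integral_neg,
      integral_Ioi_of_hasDerivAt_of_tendsto' (fun l _ ↦ hasDerivAt_div_sq_add_one l)
        hint.integrableOn (tendsto_div_sq_add_one_cocompact.mono_left atTop_le_cocompact)]
    norm_num
  have heven : ∀ l : ℝ, |(1 - |l| ^ 2) / (|l| ^ 2 + 1) ^ 2| = |(1 - l ^ 2) / (l ^ 2 + 1) ^ 2| :=
    fun l ↦ by rw [sq_abs]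
  rw [← integral_congr_ae (.of_forall heven),
    integral_comp_abs (f := fun l ↦ |(1 - l ^ 2) / (l ^ 2 + 1) ^ 2|),
    ← Ioc_union_Ioi_eq_Ioi zero_le_one, setIntegral_union (Ioc_disjoint_Ioi le_rfl)
      measurableSet_Ioi hint.abs.integrableOn hint.abs.integrableOn, hIoc, hIoi]
  norm_num

theorem integrableOn_inv_mul_abs_sub_sq_div_comp_log :
    IntegrableOn (fun k : ℝ ↦ k⁻¹ * |(1 - log k ^ 2) / (log k ^ 2 + 1) ^ 2|) (Ioi 0) :=
  (integrableOn_Ioi_zero_inv_smul_comp_log_iff _).2 integrable_sub_sq_div_sq_add_one_sq.abs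

theorem integral_inv_mul_abs_sub_sq_div_comp_log :
    ∫ k in Ioi 0, k⁻¹ * |(1 - log k ^ 2) / (log k ^ 2 + 1) ^ 2| = 2 :=
  (integral_Ioi_zero_inv_smul_comp_log fun l ↦ |(1 - l ^ 2) / (l ^ 2 + 1) ^ 2|).trans
    integral_abs_sub_sq_div_sq_add_one_sq

theorem continuous_div_sq_add_one_comp_log :
    Continuous (fun k : ℝ ↦ log k / (log k ^ 2 + 1)) := by
  have hψ : Continuous (fun l : ℝ ↦ l / (l ^ 2 + 1)) := by
    fun_prop (disch := intro; positivity)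
  refine continuous_iff_continuousAt.2 fun k ↦ ?_
  rcases eq_or_ne k 0 with rfl | hk
  -- `log 0 = 0` and `log k → -∞` as `k → 0`, where `l / (l ^ 2 + 1) → 0` too.
  · rw [← continuousWithinAt_compl_self, ContinuousWithinAt, log_zero, zero_div]
    exact (tendsto_div_sq_add_one_cocompact.mono_left atBot_le_cocompact).comp
      tendsto_log_nhdsNE_zero
  · exact hψ.continuousAt.comp (continuousAt_log hk)

theorem hasDerivAt_div_sq_add_one_comp_log {k : ℝ} (hk : k ≠ 0) :
    HasDerivAt (fun k : ℝ ↦ log k / (log k ^ 2 + 1))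
      (k⁻¹ * ((1 - log k ^ 2) / (log k ^ 2 + 1) ^ 2)) k := by
  rw [mul_comm]
  exact (hasDerivAt_div_sq_add_one (log k)).comp k (hasDerivAt_log hk)

noncomputable def sinLogKernel (x k : ℝ) : ℝ :=
  sin (k * x) * (log k ^ 2 - 1) / (k * (log k ^ 2 + 1) ^ 2)

theorem sinLogKernel_eq (x k : ℝ) :
    sinLogKernel x k = -(sin (k * x) * (k⁻¹ * ((1 - log k ^ 2) / (log k ^ 2 + 1) ^ 2))) := by
  simp only [sinLogKernel, div_eq_mul_inv, mul_inv]
  ring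

theorem norm_sinLogKernel_le (x : ℝ) {k : ℝ} (hk : 0 < k) :
    ‖sinLogKernel x k‖ ≤ k⁻¹ * |(1 - log k ^ 2) / (log k ^ 2 + 1) ^ 2| := by
  rw [Real.norm_eq_abs, sinLogKernel_eq, abs_neg, abs_mul, abs_mul, abs_of_pos (inv_pos.2 hk)]
  exact mul_le_of_le_one_left (by positivity) (abs_sin_le_one _)

theorem integrableOn_sinLogKernel (x : ℝ) : IntegrableOn (sinLogKernel x) (Ioi 0) := by
  refine integrableOn_inv_mul_abs_sub_sq_div_comp_log.mono' ?_
    ((ae_restrict_iff' measurableSet_Ioi).2 (.of_forall fun k hk ↦ norm_sinLogKernel_le x hk))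
  have : Measurable (sinLogKernel x) := by unfold sinLogKernel; fun_prop
  exact this.aestronglyMeasurable

theorem abs_integral_sinLogKernel_le (x : ℝ) : |∫ k in Ioi 0, sinLogKernel x k| ≤ 2 := by
  rw [← integral_inv_mul_abs_sub_sq_div_comp_log]
  exact norm_integral_le_of_norm_le integrableOn_inv_mul_abs_sub_sq_div_comp_log
    ((ae_restrict_iff' measurableSet_Ioi).2 (.of_forall fun k hk ↦ norm_sinLogKernel_le x hk))

theorem continuous_integral_sinLogKernel :
    Continuous (fun x ↦ ∫ k in Ioi 0, sinLogKernel x k) := by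
  refine continuous_of_dominated (fun x ↦ (integrableOn_sinLogKernel x).aestronglyMeasurable)
    (fun x ↦ (ae_restrict_iff' measurableSet_Ioi).2 (.of_forall fun k hk ↦
      norm_sinLogKernel_le x hk)) integrableOn_inv_mul_abs_sub_sq_div_comp_log
    (.of_forall fun k ↦ ?_)
  unfold sinLogKernel
  fun_prop

theorem intervalIntegral_cos_mul_div_sq_add_one_comp_log {x : ℝ} (hx : x ≠ 0) {R : ℝ}
    (hR : 0 ≤ R) :
    ∫ k in (0 : ℝ)..R, cos (k * x) * (log k / (log k ^ 2 + 1)) =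
      log R / (log R ^ 2 + 1) * (sin (R * x) / x) +
        1 / x * ∫ k in (0 : ℝ)..R, sinLogKernel x k := by
  have hsin : ∀ k, HasDerivAt (fun k ↦ sin (k * x) / x) (cos (k * x)) k := fun k ↦ by
    simpa [hx] using (((hasDerivAt_mul_const x).sin).div_const x)
  have hderiv_int : IntervalIntegrable
      (fun k : ℝ ↦ k⁻¹ * ((1 - log k ^ 2) / (log k ^ 2 + 1) ^ 2)) volume 0 R :=
    (intervalIntegrable_iff_integrableOn_Ioc_of_le hR).2 <|
      ((integrableOn_Ioi_zero_inv_smul_comp_log_iff _).2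
        integrable_sub_sq_div_sq_add_one_sq).mono_set Ioc_subset_Ioi_self
  have hparts := intervalIntegral.integral_mul_deriv_eq_deriv_mul_of_hasDeriv_right
    continuous_div_sq_add_one_comp_log.continuousOn (by fun_prop)
    (fun k hk ↦ (hasDerivAt_div_sq_add_one_comp_log (by grind)).hasDerivWithinAt)
    (fun k _ ↦ (hsin k).hasDerivWithinAt) hderiv_int
    ((continuous_cos.comp (continuous_mul_const x)).intervalIntegrable 0 R)
  simp_rw [mul_comm (cos _)]
  rw [hparts, ← intervalIntegral.integral_const_mul]
  simp only [sinLogKernel_eq, log_zero, zero_mul, zero_div, sub_zero]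
  rw [sub_eq_add_neg, ← intervalIntegral.integral_neg]
  congr 2 with k
  ring

theorem tendsto_intervalIntegral_cos_mul_div_sq_add_one_comp_log {x : ℝ} (hx : x ≠ 0) :
    Tendsto (fun R ↦ ∫ k in (0 : ℝ)..R, cos (k * x) * (log k / (log k ^ 2 + 1))) atTop
      (𝓝 (1 / x * ∫ k in Ioi 0, sinLogKernel x k)) := by
  have hboundary : Tendsto (fun R ↦ log R / (log R ^ 2 + 1) * (sin (R * x) / x)) atTop (𝓝 0) :=
    ((tendsto_div_sq_add_one_cocompact.mono_left atTop_le_cocompact).comp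
      tendsto_log_atTop).zero_mul_isBoundedUnder_le
      (isBoundedUnder_of ⟨1 / |x|, fun R ↦ by
        simpa [abs_div] using div_le_div_of_nonneg_right (abs_sin_le_one (R * x)) (abs_nonneg x)⟩)
  have hintegral := (intervalIntegral_tendsto_integral_Ioi 0 (integrableOn_sinLogKernel x)
    tendsto_id).const_mul (1 / x)
  rw [← zero_add (1 / x * _)]
  refine (hboundary.add hintegral).congr' ?_
  filter_upwards [eventually_ge_atTop 0] with R hR
  exact (intervalIntegral_cos_mul_div_sq_add_one_comp_log hx hR).symm

/-- For every `x ≠ 0` the improper integral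
`I(x) = lim_{R→∞} ∫₀^R cos(kx) log k/((log k)²+1) dk` exists and equals the absolutely
convergent integral `(1/x) ∫₀^∞ sin(kx)((log k)²−1)/(k((log k)²+1)²) dk`; moreover
`|I(x)| ≤ 2/|x|` for all `x ≠ 0`, and `I` is continuous on `ℝ \ {0}`. -/
theorem stmt5 :
    (∀ x : ℝ, x ≠ 0 →
      MeasureTheory.IntegrableOn
        (fun k => Real.sin (k * x) * ((Real.log k) ^ 2 - 1) /
          (k * ((Real.log k) ^ 2 + 1) ^ 2)) (Set.Ioi (0:ℝ))) ∧
    (∀ x : ℝ, x ≠ 0 →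
      Filter.Tendsto
        (fun R => ∫ k in (0:ℝ)..R, Real.cos (k * x) *
          (Real.log k / ((Real.log k) ^ 2 + 1)))
        Filter.atTop
        (nhds ((1 / x) * ∫ k in Set.Ioi (0:ℝ),
          Real.sin (k * x) * ((Real.log k) ^ 2 - 1) /
            (k * ((Real.log k) ^ 2 + 1) ^ 2)))) ∧
    (∀ x : ℝ, x ≠ 0 →
      |(1 / x) * ∫ k in Set.Ioi (0:ℝ),
          Real.sin (k * x) * ((Real.log k) ^ 2 - 1) /
            (k * ((Real.log k) ^ 2 + 1) ^ 2)| ≤ 2 / |x|) ∧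
    ContinuousOn
      (fun x => (1 / x) * ∫ k in Set.Ioi (0:ℝ),
        Real.sin (k * x) * ((Real.log k) ^ 2 - 1) /
          (k * ((Real.log k) ^ 2 + 1) ^ 2))
      {x : ℝ | x ≠ 0} := by
  refine ⟨fun x _ ↦ integrableOn_sinLogKernel x,
    fun x hx ↦ tendsto_intervalIntegral_cos_mul_div_sq_add_one_comp_log hx, fun x _ ↦ ?_,
    (continuousOn_const.div continuousOn_id fun x hx ↦ hx).mul
      continuous_integral_sinLogKernel.continuousOn⟩
  calc |1 / x * ∫ k in Ioi 0, sinLogKernel x k|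
      = 1 / |x| * |∫ k in Ioi 0, sinLogKernel x k| := by rw [abs_mul, abs_div, abs_one]
    _ ≤ 1 / |x| * 2 := by gcongr; exact abs_integral_sinLogKernel_le x
    _ = 2 / |x| := by ring
end

section
/- For every x ≠ 0 the improper integral J(x) = lim_{R→∞} ∫₀^R sin(kx)/((log k)² + 1) dk exists and equals the absolutely convergent integral (1/x) ∫₀^∞ (1 − cos(kx)) · 2 log k /( k · ((log k)² + 1)² ) dk; moreover |J(x)| ≤ 4/|x| for all x ≠ 0, and J is continuous on ℝ \ {0}. -/
/-!
Integrating by parts against `k ↦ (1 - cos (k x)) / x`, which vanishes at `k = 0`, writes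
`∫₀^R sin (k x) / ((log k)² + 1) dk` as the boundary term `(1 - cos (R x)) / (x ((log R)² + 1))`,
which tends to `0`, plus `1 / x` times the integral of
`(1 - cos (k x)) · 2 log k / (k ((log k)² + 1)²)`. As `|1 - cos| ≤ 2`, this integrand is
dominated, uniformly in `x`, by `4 |log k| / (k ((log k)² + 1)²)`, whose integral over `(0, ∞)`
is `4 ∫ |l| / (l² + 1)² dl = 4` after the substitution `k = exp l`. This gives the bound `4 / |x|`,
and dominated convergence gives continuity.
-/

open MeasureTheory Real Set Filter Topology

lemma integrable_abs_div_sq_add_one_sq : Integrable fun l : ℝ => |l| / (l ^ 2 + 1) ^ 2 := by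
  refine integrable_inv_one_add_sq.mono'
    (Continuous.div (by fun_prop) (by fun_prop) fun l => by positivity).aestronglyMeasurable
    (ae_of_all _ fun l => ?_)
  have hl : |l| ≤ l ^ 2 + 1 := by nlinarith [sq_abs l, abs_nonneg l]
  rw [Real.norm_eq_abs, abs_of_nonneg (by positivity), add_comm 1, ← one_div,
    div_le_div_iff₀ (by positivity) (by positivity)]
  nlinarith [sq_nonneg l]

lemma integral_abs_div_sq_add_one_sq : ∫ l : ℝ, |l| / (l ^ 2 + 1) ^ 2 = 1 := by
  have hderiv : ∀ l ∈ Ici (0 : ℝ),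
      HasDerivAt (fun l => -(2 * (l ^ 2 + 1))⁻¹) (l / (l ^ 2 + 1) ^ 2) l := by
    intro l _
    refine ((((hasDerivAt_pow 2 l).add_const 1).const_mul 2).inv (by positivity)).neg.congr_deriv ?_
    field_simp
    ring
  have hlim : Tendsto (fun l : ℝ => -(2 * (l ^ 2 + 1))⁻¹) atTop (𝓝 (-0)) :=
    (((tendsto_pow_atTop two_ne_zero).atTop_add tendsto_const_nhds).const_mul_atTop
      two_pos).inv_tendsto_atTop.neg
  have hIoi := integral_Ioi_of_hasDerivAt_of_nonneg' hderiv
    (fun l hl => div_nonneg (le_of_lt hl) (by positivity)) hlim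
  have := integral_comp_abs (f := fun t : ℝ => t / (t ^ 2 + 1) ^ 2)
  simp only [sq_abs] at this
  rw [this, hIoi]
  norm_num

lemma integrableOn_Ioi_comp_log_div_iff (g : ℝ → ℝ) :
    IntegrableOn (fun k => g (log k) / k) (Ioi 0) ↔ Integrable g := by
  rw [← range_exp, ← image_univ, integrableOn_image_iff_integrableOn_abs_deriv_smul
    MeasurableSet.univ (fun l _ => (hasDerivAt_exp l).hasDerivWithinAt) exp_injective.injOn,
    integrableOn_univ]
  refine integrable_congr (ae_of_all _ fun l => ?_)
  simp only [smul_eq_mul, abs_of_pos (exp_pos l), log_exp]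
  field_simp

lemma integral_Ioi_comp_log_div (g : ℝ → ℝ) : ∫ k in Ioi 0, g (log k) / k = ∫ l, g l := by
  rw [← range_exp, ← image_univ, integral_image_eq_integral_abs_deriv_smul
    MeasurableSet.univ (fun l _ => (hasDerivAt_exp l).hasDerivWithinAt) exp_injective.injOn,
    setIntegral_univ]
  refine integral_congr_ae (ae_of_all _ fun l => ?_)
  simp only [smul_eq_mul, abs_of_pos (exp_pos l), log_exp]
  field_simp

-- At `k = 0` the quotient is `f 0 / (log 0 ^ 2 + 1) = 0` because `log 0 = 0` in Mathlib.
lemma continuous_div_log_sq_add_one {f : ℝ → ℝ} (hf : Continuous f) (hf0 : f 0 = 0) :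
    Continuous fun k => f k / (log k ^ 2 + 1) := by
  rw [continuous_iff_continuousAt]
  intro k
  rcases eq_or_ne k 0 with rfl | hk
  · rw [ContinuousAt, hf0, zero_div]
    refine squeeze_zero_norm (fun k => ?_) (by simpa [hf0] using (hf.tendsto 0).norm)
    rw [norm_div, Real.norm_of_nonneg (by positivity : 0 ≤ log k ^ 2 + 1)]
    exact div_le_self (norm_nonneg _) (le_add_of_nonneg_left (sq_nonneg _))
  · exact hf.continuousAt.div ((continuousAt_log hk).pow 2 |>.add continuousAt_const)
      (by positivity)

lemma tendsto_div_log_sq_add_one_atTop {f : ℝ → ℝ} {C : ℝ} (hf : ∀ k, |f k| ≤ C) :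
    Tendsto (fun k => f k / (log k ^ 2 + 1)) atTop (𝓝 0) := by
  have hinv : Tendsto (fun k => (log k ^ 2 + 1)⁻¹) atTop (𝓝 0) :=
    ((tendsto_pow_atTop two_ne_zero).comp tendsto_log_atTop |>.atTop_add
      tendsto_const_nhds).inv_tendsto_atTop
  simpa only [div_eq_mul_inv] using
    isBoundedUnder_le_mul_tendsto_zero (isBoundedUnder_of ⟨C, hf⟩) hinv

noncomputable def ibpIntegrand (x k : ℝ) : ℝ :=
  (1 - cos (k * x)) * (2 * log k) / (k * (log k ^ 2 + 1) ^ 2)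

noncomputable def ibpBoundary (x k : ℝ) : ℝ := (1 - cos (k * x)) / x / (log k ^ 2 + 1)

noncomputable def ibpMajorant (k : ℝ) : ℝ := 4 * (|log k| / (log k ^ 2 + 1) ^ 2 / k)

lemma abs_one_sub_cos_le_two (y : ℝ) : |1 - cos y| ≤ 2 := by
  rw [abs_le]
  constructor <;> linarith [neg_one_le_cos y, cos_le_one y]

lemma abs_ibpIntegrand_le (x : ℝ) {k : ℝ} (hk : 0 < k) :
    |ibpIntegrand x k| ≤ ibpMajorant k := by
  rw [ibpIntegrand, abs_div, abs_of_pos (by positivity : 0 < k * (log k ^ 2 + 1) ^ 2), abs_mul,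
    abs_mul, abs_two]
  calc |1 - cos (k * x)| * (2 * |log k|) / (k * (log k ^ 2 + 1) ^ 2)
      ≤ 2 * (2 * |log k|) / (k * (log k ^ 2 + 1) ^ 2) := by
        gcongr
        exact abs_one_sub_cos_le_two _
    _ = ibpMajorant k := by
        rw [ibpMajorant]
        field_simp
        ring

lemma integrableOn_ibpMajorant : IntegrableOn ibpMajorant (Ioi 0) :=
  ((integrableOn_Ioi_comp_log_div_iff _).2 integrable_abs_div_sq_add_one_sq).const_mul 4

lemma integral_ibpMajorant : ∫ k in Ioi 0, ibpMajorant k = 4 := by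
  rw [← mul_one 4, ← integral_abs_div_sq_add_one_sq,
    ← integral_Ioi_comp_log_div fun l => |l| / (l ^ 2 + 1) ^ 2, ← integral_const_mul]
  rfl

lemma continuousOn_ibpIntegrand (x : ℝ) : ContinuousOn (ibpIntegrand x) (Ioi 0) := by
  intro k hk
  have hk₀ : k ≠ 0 := hk.ne'
  unfold ibpIntegrand
  exact ContinuousAt.continuousWithinAt (by fun_prop (disch := first | assumption | positivity))

lemma ae_norm_ibpIntegrand_le (x : ℝ) :
    ∀ᵐ k ∂volume.restrict (Ioi 0), ‖ibpIntegrand x k‖ ≤ ibpMajorant k :=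
  (ae_restrict_iff' measurableSet_Ioi).2 (ae_of_all _ fun _ hk => abs_ibpIntegrand_le x hk)

lemma integrableOn_ibpIntegrand (x : ℝ) : IntegrableOn (ibpIntegrand x) (Ioi 0) :=
  integrableOn_ibpMajorant.mono'
    ((continuousOn_ibpIntegrand x).aestronglyMeasurable measurableSet_Ioi)
    (ae_norm_ibpIntegrand_le x)

lemma abs_integral_ibpIntegrand_le (x : ℝ) : |∫ k in Ioi 0, ibpIntegrand x k| ≤ 4 :=
  integral_ibpMajorant ▸
    norm_integral_le_of_norm_le integrableOn_ibpMajorant (ae_norm_ibpIntegrand_le x)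

lemma continuous_integral_ibpIntegrand : Continuous fun x => ∫ k in Ioi 0, ibpIntegrand x k :=
  continuous_of_dominated
    (fun x => (continuousOn_ibpIntegrand x).aestronglyMeasurable measurableSet_Ioi)
    ae_norm_ibpIntegrand_le integrableOn_ibpMajorant
    (ae_of_all _ fun k => by unfold ibpIntegrand; fun_prop)

lemma hasDerivAt_ibpBoundary {x k : ℝ} (hx : x ≠ 0) (hk : 0 < k) :
    HasDerivAt (ibpBoundary x) (sin (k * x) / (log k ^ 2 + 1) - ibpIntegrand x k / x) k := by
  have hcos : HasDerivAt (fun k => (1 - cos (k * x)) / x) (sin (k * x)) k := by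
    refine (((hasDerivAt_mul_const x).cos).const_sub 1).div_const x |>.congr_deriv ?_
    field_simp
  have hlog : HasDerivAt (fun k => log k ^ 2 + 1) (2 * log k * k⁻¹) k := by
    simpa using ((hasDerivAt_log hk.ne').pow 2).add_const 1
  refine (hcos.div hlog (by positivity)).congr_deriv ?_
  unfold ibpIntegrand
  field_simp

lemma tendsto_ibpBoundary_atTop (x : ℝ) : Tendsto (ibpBoundary x) atTop (𝓝 0) :=
  tendsto_div_log_sq_add_one_atTop (C := 2 / |x|) fun k => by
    rw [abs_div]
    exact div_le_div_of_nonneg_right (abs_one_sub_cos_le_two _) (abs_nonneg x)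

lemma intervalIntegral_sin_div_log_sq_add_one {x R : ℝ} (hx : x ≠ 0) (hR : 0 ≤ R) :
    ∫ k in 0..R, sin (k * x) / (log k ^ 2 + 1) =
      ibpBoundary x R + (∫ k in 0..R, ibpIntegrand x k) / x := by
  have hsin : IntervalIntegrable (fun k => sin (k * x) / (log k ^ 2 + 1)) volume 0 R :=
    (continuous_div_log_sq_add_one (by fun_prop) (by simp)).intervalIntegrable 0 R
  have hibp : IntervalIntegrable (ibpIntegrand x) volume 0 R :=
    (intervalIntegrable_iff_integrableOn_Ioc_of_le hR).2
      ((integrableOn_ibpIntegrand x).mono_set Ioc_subset_Ioi_self)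
  have hftc := intervalIntegral.integral_eq_sub_of_hasDerivAt_of_le (f := ibpBoundary x) hR
    (continuous_div_log_sq_add_one (f := fun k => (1 - cos (k * x)) / x) (by fun_prop)
      (by simp)).continuousOn
    (fun k hk => hasDerivAt_ibpBoundary hx hk.1) (hsin.sub (hibp.div_const x))
  rw [intervalIntegral.integral_sub hsin (hibp.div_const x), intervalIntegral.integral_div] at hftc
  have hzero : ibpBoundary x 0 = 0 := by simp [ibpBoundary]
  rw [hzero, sub_zero] at hftc
  linarith

/-- For every `x ≠ 0` the improper integral
`J(x) = lim_{R→∞} ∫₀^R sin(kx)/((log k)²+1) dk` exists and equals the absolutely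
convergent integral `(1/x) ∫₀^∞ (1 − cos(kx)) · 2 log k/(k((log k)²+1)²) dk`; moreover
`|J(x)| ≤ 4/|x|` for all `x ≠ 0`, and `J` is continuous on `ℝ \ {0}`. -/
theorem stmt7 :
    (∀ x : ℝ, x ≠ 0 →
      MeasureTheory.IntegrableOn
        (fun k => (1 - Real.cos (k * x)) * (2 * Real.log k) /
          (k * ((Real.log k) ^ 2 + 1) ^ 2)) (Set.Ioi (0:ℝ))) ∧
    (∀ x : ℝ, x ≠ 0 →
      Filter.Tendsto
        (fun R => ∫ k in (0:ℝ)..R, Real.sin (k * x) / ((Real.log k) ^ 2 + 1))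
        Filter.atTop
        (nhds ((1 / x) * ∫ k in Set.Ioi (0:ℝ),
          (1 - Real.cos (k * x)) * (2 * Real.log k) /
            (k * ((Real.log k) ^ 2 + 1) ^ 2)))) ∧
    (∀ x : ℝ, x ≠ 0 →
      |(1 / x) * ∫ k in Set.Ioi (0:ℝ),
          (1 - Real.cos (k * x)) * (2 * Real.log k) /
            (k * ((Real.log k) ^ 2 + 1) ^ 2)| ≤ 4 / |x|) ∧
    ContinuousOn
      (fun x => (1 / x) * ∫ k in Set.Ioi (0:ℝ),
        (1 - Real.cos (k * x)) * (2 * Real.log k) /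
          (k * ((Real.log k) ^ 2 + 1) ^ 2))
      {x : ℝ | x ≠ 0} := by
  refine ⟨fun x _ => integrableOn_ibpIntegrand x, fun x hx => ?_, fun x _ => ?_, ?_⟩
  · have hlim := (tendsto_ibpBoundary_atTop x).add
      ((intervalIntegral_tendsto_integral_Ioi 0 (integrableOn_ibpIntegrand x) tendsto_id).div_const x)
    rw [zero_add] at hlim
    rw [one_div_mul_eq_div]
    refine hlim.congr' ?_
    filter_upwards [eventually_ge_atTop 0] with R hR
    exact (intervalIntegral_sin_div_log_sq_add_one hx hR).symm
  · rw [abs_mul, one_div, abs_inv, inv_mul_eq_div]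
    exact div_le_div_of_nonneg_right (abs_integral_ibpIntegrand_le x) (abs_nonneg x)
  · exact (continuousOn_const.div continuousOn_id fun x hx => hx).mul
      continuous_integral_ibpIntegrand.continuousOn
end

section
/- Let J(x) = (1/x) ∫₀^∞ (1 − cos(kx)) · 2 log k /( k · ((log k)² + 1)² ) dk for x > 0. Then there exist constants C > 0 and ε ∈ (0,1) such that for all x ∈ (0,ε) one has |J(x)| ≤ C ( 1 + 1/( x (4 + (log x)²) ) ). In particular, J is Lebesgue integrable on (0,ε). -/
/-!
Write `K(k) = 2 log k / (k((log k)² + 1)²)`, the derivative of `-1/((log k)² + 1)`.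
For `a ≥ 1`, split `∫₀^∞ (1 - cos(kx)) K(k) dk` at `a`. On `(0, a]` use `1 - cos u ≤ u²/2`
and `|K(k)| ≤ 1/k`, which bound the piece by `x²a²/2`; on `(a, ∞)` use `1 - cos u ≤ 2` and
`K ≥ 0`, so the piece is at most `2 ∫ₐ^∞ K = 2/((log a)² + 1)`. The choice `a = x^(-1/2)`
gives `x/2 + 8/(4 + (log x)²)`. Finally `1/(x(4 + (log x)²))` is integrable near `0`, as
the substitution `x = eᵘ` turns it into `1/(4 + u²)`.
-/

open MeasureTheory Real Set Filter Topology

noncomputable def logKernel (k : ℝ) : ℝ := 2 * log k / (k * (log k ^ 2 + 1) ^ 2)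

@[fun_prop]
lemma measurable_logKernel : Measurable logKernel := by
  unfold logKernel
  fun_prop

lemma hasDerivAt_neg_inv_log_sq_add_one {k : ℝ} (hk : 0 < k) :
    HasDerivAt (fun k => -(log k ^ 2 + 1)⁻¹) (logKernel k) k := by
  have hlog : HasDerivAt (fun k => log k ^ 2 + 1) (2 * log k * k⁻¹) k := by
    simpa using ((hasDerivAt_log hk.ne').pow 2).add_const 1
  refine (hlog.inv (by positivity)).neg.congr_deriv ?_
  rw [logKernel]
  field_simp

lemma tendsto_neg_inv_log_sq_add_one_atTop :
    Tendsto (fun k => -(log k ^ 2 + 1)⁻¹) atTop (𝓝 0) := by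
  have h : Tendsto (fun k => log k ^ 2 + 1) atTop atTop :=
    tendsto_atTop_add_const_right _ 1 ((tendsto_pow_atTop two_ne_zero).comp tendsto_log_atTop)
  simpa using h.inv_tendsto_atTop.neg

lemma logKernel_nonneg {k : ℝ} (hk : 1 ≤ k) : 0 ≤ logKernel k := by
  have := log_nonneg hk
  unfold logKernel
  positivity

lemma abs_logKernel_le_inv {k : ℝ} (hk : 0 < k) : |logKernel k| ≤ k⁻¹ := by
  rw [logKernel, abs_div, abs_of_pos (by positivity : 0 < k * (log k ^ 2 + 1) ^ 2),
    div_le_iff₀ (by positivity), inv_mul_cancel_left₀ hk.ne', abs_mul, abs_two]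
  nlinarith [sq_abs (log k), abs_nonneg (log k), sq_nonneg (|log k| - 1), sq_nonneg (log k)]

lemma integrableOn_logKernel_Ioi {a : ℝ} (ha : 1 ≤ a) : IntegrableOn logKernel (Ioi a) :=
  integrableOn_Ioi_deriv_of_nonneg
    (hasDerivAt_neg_inv_log_sq_add_one (by linarith)).continuousAt.continuousWithinAt
    (fun _ hk => hasDerivAt_neg_inv_log_sq_add_one (by linarith [mem_Ioi.1 hk]))
    (fun _ hk => logKernel_nonneg (ha.trans (le_of_lt hk)))
    tendsto_neg_inv_log_sq_add_one_atTop

lemma integral_logKernel_Ioi {a : ℝ} (ha : 1 ≤ a) :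
    ∫ k in Ioi a, logKernel k = (log a ^ 2 + 1)⁻¹ := by
  simpa using integral_Ioi_of_hasDerivAt_of_nonneg
    (hasDerivAt_neg_inv_log_sq_add_one (by linarith)).continuousAt.continuousWithinAt
    (fun _ hk => hasDerivAt_neg_inv_log_sq_add_one (by linarith [mem_Ioi.1 hk]))
    (fun _ hk => logKernel_nonneg (ha.trans (le_of_lt hk)))
    tendsto_neg_inv_log_sq_add_one_atTop

lemma abs_one_sub_cos_mul_logKernel_le_mul (x : ℝ) {k : ℝ} (hk : 0 < k) :
    |(1 - cos (k * x)) * logKernel k| ≤ x ^ 2 * k / 2 := by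
  have hcos : 0 ≤ 1 - cos (k * x) := by linarith [cos_le_one (k * x)]
  calc |(1 - cos (k * x)) * logKernel k| = (1 - cos (k * x)) * |logKernel k| := by
        rw [abs_mul, abs_of_nonneg hcos]
    _ ≤ (k * x) ^ 2 / 2 * k⁻¹ := by
        gcongr
        · linarith [one_sub_sq_div_two_le_cos (x := k * x)]
        · exact abs_logKernel_le_inv hk
    _ = x ^ 2 * k / 2 := by field_simp

lemma abs_one_sub_cos_mul_logKernel_le_two_mul (x : ℝ) {k : ℝ} (hk : 1 ≤ k) :
    |(1 - cos (k * x)) * logKernel k| ≤ 2 * logKernel k := by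
  rw [abs_mul, abs_of_nonneg (logKernel_nonneg hk),
    abs_of_nonneg (by linarith [cos_le_one (k * x)])]
  gcongr
  · exact logKernel_nonneg hk
  · linarith [neg_one_le_cos (k * x)]

lemma abs_integral_one_sub_cos_mul_logKernel_le (x : ℝ) {a : ℝ} (ha : 1 ≤ a) :
    |∫ k in Ioi 0, (1 - cos (k * x)) * logKernel k|
      ≤ x ^ 2 * a ^ 2 / 2 + 2 * (log a ^ 2 + 1)⁻¹ := by
  set f := fun k => (1 - cos (k * x)) * logKernel k
  have ha0 : 0 < a := by linarith
  have hf : ∀ μ : Measure ℝ, AEStronglyMeasurable f μ := fun _ =>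
    (by fun_prop : Measurable f).aestronglyMeasurable
  have near : ∀ k ∈ Ioc 0 a, ‖f k‖ ≤ x ^ 2 * a / 2 := fun k hk =>
    (abs_one_sub_cos_mul_logKernel_le_mul x hk.1).trans (by gcongr; exact hk.2)
  have far : ∀ k ∈ Ioi a, ‖f k‖ ≤ 2 * logKernel k := fun k hk =>
    abs_one_sub_cos_mul_logKernel_le_two_mul x (ha.trans (le_of_lt hk))
  have hdom : IntegrableOn (fun k => 2 * logKernel k) (Ioi a) :=
    (integrableOn_logKernel_Ioi ha).const_mul 2
  have hnear : IntegrableOn f (Ioc 0 a) :=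
    Integrable.mono' (integrableOn_const measure_Ioc_lt_top.ne) (hf _)
      ((ae_restrict_iff' measurableSet_Ioc).2 (ae_of_all _ near))
  have hfar : IntegrableOn f (Ioi a) :=
    Integrable.mono' hdom (hf _) ((ae_restrict_iff' measurableSet_Ioi).2 (ae_of_all _ far))
  rw [← Ioc_union_Ioi_eq_Ioi ha0.le, setIntegral_union Ioc_disjoint_Ioi_same measurableSet_Ioi
    hnear hfar]
  calc |(∫ k in Ioc 0 a, f k) + ∫ k in Ioi a, f k|
      ≤ ‖∫ k in Ioc 0 a, f k‖ + ‖∫ k in Ioi a, f k‖ := abs_add_le _ _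
    _ ≤ x ^ 2 * a / 2 * volume.real (Ioc 0 a) + ∫ k in Ioi a, 2 * logKernel k :=
        add_le_add (norm_setIntegral_le_of_norm_le_const measure_Ioc_lt_top near)
          (norm_integral_le_of_norm_le hdom
            ((ae_restrict_iff' measurableSet_Ioi).2 (ae_of_all _ far)))
    _ = x ^ 2 * a ^ 2 / 2 + 2 * (log a ^ 2 + 1)⁻¹ := by
        rw [volume_real_Ioc_of_le ha0.le, integral_const_mul, integral_logKernel_Ioi ha]
        ring

lemma abs_inv_mul_integral_one_sub_cos_mul_logKernel_le {x : ℝ} (hx : x ∈ Ioo 0 1) :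
    |1 / x * ∫ k in Ioi 0, (1 - cos (k * x)) * logKernel k|
      ≤ 8 * (1 + 1 / (x * (4 + log x ^ 2))) := by
  obtain ⟨hx0, hx1⟩ := hx
  have hsqrt : 0 < √x := sqrt_pos.2 hx0
  have h := abs_integral_one_sub_cos_mul_logKernel_le x
    (one_le_inv₀ hsqrt |>.2 (sqrt_le_one.2 hx1.le))
  rw [inv_pow, sq_sqrt hx0.le, log_inv, log_sqrt hx0.le] at h
  rw [abs_mul, abs_of_pos (by positivity)]
  calc 1 / x * |∫ k in Ioi 0, (1 - cos (k * x)) * logKernel k|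
      ≤ 1 / x * (x ^ 2 * x⁻¹ / 2 + 2 * ((-(log x / 2)) ^ 2 + 1)⁻¹) := by gcongr
    _ = 1 / 2 + 8 * (1 / (x * (4 + log x ^ 2))) := by field_simp; ring
    _ ≤ 8 * (1 + 1 / (x * (4 + log x ^ 2))) := by
        have : 0 ≤ 1 / (x * (4 + log x ^ 2)) := by positivity
        linarith

lemma measurable_integral_one_sub_cos_mul_logKernel :
    Measurable fun x => ∫ k in Ioi 0, (1 - cos (k * x)) * logKernel k :=
  (StronglyMeasurable.integral_prod_right (f := fun x k => (1 - cos (k * x)) * logKernel k)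
    (by fun_prop : Measurable _).stronglyMeasurable).measurable

lemma integrableOn_one_div_mul_four_add_log_sq :
    IntegrableOn (fun x => 1 / (x * (4 + log x ^ 2))) (Ioi 0) := by
  rw [← range_exp, ← image_univ, integrableOn_image_iff_integrableOn_abs_deriv_smul
    MeasurableSet.univ (fun u _ => (hasDerivAt_exp u).hasDerivWithinAt) exp_injective.injOn]
  have heq : (fun u => |exp u| • (1 / (exp u * (4 + log (exp u) ^ 2))))
      = fun u => (4 + u ^ 2)⁻¹ := by
    ext u
    rw [smul_eq_mul, abs_of_pos (exp_pos u), log_exp]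
    field_simp
  rw [heq, integrableOn_univ]
  refine integrable_inv_one_add_sq.mono' (by fun_prop) (ae_of_all _ fun u => ?_)
  rw [norm_inv, norm_of_nonneg (by positivity)]
  exact inv_anti₀ (by positivity) (by linarith)

/-- Let `J(x) = (1/x) ∫₀^∞ (1 − cos(kx)) · 2 log k/(k((log k)²+1)²) dk` for
`x > 0`. Then there are `C > 0` and `ε ∈ (0,1)` such that for all `x ∈ (0,ε)`,
`|J(x)| ≤ C (1 + 1/(x (4 + (log x)²)))`; in particular `J` is Lebesgue integrable
on `(0,ε)`. -/
theorem stmt8 :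
    ∃ C : ℝ, 0 < C ∧ ∃ ε ∈ Set.Ioo (0:ℝ) 1,
      (∀ x ∈ Set.Ioo (0:ℝ) ε,
        |(1 / x) * ∫ k in Set.Ioi (0:ℝ),
            (1 - Real.cos (k * x)) * (2 * Real.log k) /
              (k * ((Real.log k) ^ 2 + 1) ^ 2)|
          ≤ C * (1 + 1 / (x * (4 + (Real.log x) ^ 2)))) ∧
      MeasureTheory.IntegrableOn
        (fun x => (1 / x) * ∫ k in Set.Ioi (0:ℝ),
          (1 - Real.cos (k * x)) * (2 * Real.log k) /
            (k * ((Real.log k) ^ 2 + 1) ^ 2))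
        (Set.Ioo (0:ℝ) ε) := by
  have hK : ∀ x k : ℝ, (1 - cos (k * x)) * (2 * log k) / (k * (log k ^ 2 + 1) ^ 2)
      = (1 - cos (k * x)) * logKernel k := fun _ _ => mul_div_assoc _ _ _
  simp only [hK]
  have hbound : ∀ x ∈ Ioo (0 : ℝ) (1 / 2),
      |1 / x * ∫ k in Ioi 0, (1 - cos (k * x)) * logKernel k|
        ≤ 8 * (1 + 1 / (x * (4 + log x ^ 2))) := fun x hx =>
    abs_inv_mul_integral_one_sub_cos_mul_logKernel_le ⟨hx.1, hx.2.trans (by norm_num)⟩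
  refine ⟨8, by norm_num, 1 / 2, ⟨by norm_num, by norm_num⟩, hbound, ?_⟩
  have hmajorant : IntegrableOn (fun x => 8 * (1 + 1 / (x * (4 + log x ^ 2)))) (Ioo 0 (1 / 2)) :=
    ((integrableOn_const measure_Ioo_lt_top.ne).add
      (integrableOn_one_div_mul_four_add_log_sq.mono_set Ioo_subset_Ioi_self)).const_mul 8
  refine hmajorant.mono' ?_ ((ae_restrict_iff' measurableSet_Ioo).2 (ae_of_all _ hbound))
  exact (Measurable.mul (f := fun x : ℝ => 1 / x) (by fun_prop)
    measurable_integral_one_sub_cos_mul_logKernel).aestronglyMeasurable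
end

section
/- Let k ≥ 0, let W and h be continuous real-valued functions on [τ₀,∞), and let f ∈ C²([τ₀,∞);ℝ) solve f'' + (k² + W) f = h with f(τ₀) = f₀ and f'(τ₀) = f₀'. Then for every τ ≥ τ₀, |f(τ)| ≤ ( |f₀| + (τ−τ₀)|f₀'| + (τ−τ₀)² · sup_{η∈[τ₀,τ]} |h(η)| ) · exp( (τ−τ₀)² · sup_{η∈[τ₀,τ]} |W(η)| ). -/
open MeasureTheory Real Set

/-! Treating `h - W f` as a forcing term of `y'' + k² y = 0`, variation of constants writes `f σ` as
`f₀ cos (k (σ - τ₀)) + f₀' sin (k (σ - τ₀)) / k` plus the retarded integral of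
`sin (k (σ - s)) / k · (h - W f) s`. Since `|sin (k t) / k| ≤ t`, on `[τ₀, τ]` this gives
`|f σ| ≤ C + (τ - τ₀) M ∫_{τ₀}^σ |f|`, where `C` is the prefactor of the exponential in the claim
and `M = sup |W|`. Grönwall's inequality in integral form turns this into
`|f τ| ≤ C exp ((τ - τ₀)² M)`. -/

/- Solution of `y'' + k² y = 0` with `y 0 = 0`, `y' 0 = 1`, i.e. `sin (k x) / k`; the case
`k = 0` is separate because `sin (0 * x) / 0 = 0` in Lean. -/
noncomputable def sinKernel (k x : ℝ) : ℝ := if k = 0 then x else sin (k * x) / k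

@[simp]
lemma sinKernel_zero_right (k : ℝ) : sinKernel k 0 = 0 := by
  simp [sinKernel]

lemma sinKernel_zero_left : sinKernel 0 = id := by
  ext x
  simp [sinKernel]

lemma sinKernel_of_ne_zero {k : ℝ} (hk : k ≠ 0) : sinKernel k = fun x => sin (k * x) / k := by
  ext x
  simp [sinKernel, hk]

lemma hasDerivAt_sinKernel (k x : ℝ) : HasDerivAt (sinKernel k) (cos (k * x)) x := by
  rcases eq_or_ne k 0 with rfl | hk
  · simpa [sinKernel_zero_left] using hasDerivAt_id x
  · rw [sinKernel_of_ne_zero hk]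
    have hsin := (((hasDerivAt_id' x).const_mul k).sin).div_const k
    exact hsin.congr_deriv (by field_simp)

@[fun_prop]
lemma continuous_sinKernel (k : ℝ) : Continuous (sinKernel k) :=
  continuous_iff_continuousAt.2 fun x => (hasDerivAt_sinKernel k x).continuousAt

lemma hasDerivAt_cos_mul (k x : ℝ) :
    HasDerivAt (fun y => cos (k * y)) (-(k ^ 2 * sinKernel k x)) x := by
  convert ((hasDerivAt_id' x).const_mul k).cos using 1
  rcases eq_or_ne k 0 with rfl | hk
  · simp
  · rw [sinKernel_of_ne_zero hk]
    field_simp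

lemma abs_sinKernel_le (k : ℝ) {x : ℝ} (hx : 0 ≤ x) : |sinKernel k x| ≤ x := by
  unfold sinKernel
  split_ifs with hk
  · exact (abs_of_nonneg hx).le
  · rw [abs_div, div_le_iff₀ (abs_pos.2 hk)]
    calc |sin (k * x)| ≤ |k * x| := abs_sin_le_abs
      _ = x * |k| := by rw [abs_mul, abs_of_nonneg hx, mul_comm]

lemma eq_cos_add_sinKernel_add_integral {f f' g : ℝ → ℝ} {k a b : ℝ} (hab : a ≤ b)
    (hf : ContinuousOn f (Icc a b)) (hf' : ContinuousOn f' (Icc a b))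
    (hg : ContinuousOn g (Icc a b)) (hfd : ∀ s ∈ Ioo a b, HasDerivAt f (f' s) s)
    (hf'd : ∀ s ∈ Ioo a b, HasDerivAt f' (g s - k ^ 2 * f s) s) :
    f b = f a * cos (k * (b - a)) + f' a * sinKernel k (b - a) +
      ∫ s in a..b, sinKernel k (b - s) * g s := by
  -- the `k²` terms cancel in the derivative of `Φ`
  set Φ := fun s => f s * cos (k * (b - s)) + f' s * sinKernel k (b - s)
  have hΦd : ∀ s ∈ Ioo a b, HasDerivAt Φ (sinKernel k (b - s) * g s) s := by
    intro s hs
    have hcos := (hasDerivAt_cos_mul k (b - s)).comp s ((hasDerivAt_id' s).const_sub b)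
    have hsin := (hasDerivAt_sinKernel k (b - s)).comp s ((hasDerivAt_id' s).const_sub b)
    exact (((hfd s hs).mul hcos).add ((hf'd s hs).mul hsin)).congr_deriv
      (by simp only [Function.comp_apply]; ring)
  have hΦc : ContinuousOn Φ (Icc a b) := by fun_prop
  have hint : IntervalIntegrable (fun s => sinKernel k (b - s) * g s) volume a b :=
    (by fun_prop : ContinuousOn _ (Icc a b)).intervalIntegrable_of_Icc hab
  have hftc := intervalIntegral.integral_eq_sub_of_hasDerivAt_of_le hab hΦc hΦd hint
  simp only [Φ, sub_self, mul_zero, cos_zero, mul_one, sinKernel_zero_right] at hftc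
  linarith

lemma abs_le_of_hasDerivAt_of_abs_le {f f' W h : ℝ → ℝ} {k a b H M : ℝ} (hab : a ≤ b)
    (hW : ContinuousOn W (Icc a b)) (hh : ContinuousOn h (Icc a b))
    (hf : ContinuousOn f (Icc a b)) (hf' : ContinuousOn f' (Icc a b))
    (hfd : ∀ s ∈ Ioo a b, HasDerivAt f (f' s) s)
    (hf'd : ∀ s ∈ Ioo a b, HasDerivAt f' (h s - (k ^ 2 + W s) * f s) s)
    (hH : ∀ s ∈ Icc a b, |h s| ≤ H) (hM : ∀ s ∈ Icc a b, |W s| ≤ M) :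
    |f b| ≤ |f a| + (b - a) * |f' a| + (b - a) ^ 2 * H + (b - a) * M * ∫ s in a..b, |f s| := by
  set g := fun s => h s - W s * f s
  have hg : ContinuousOn g (Icc a b) := hh.sub (hW.mul hf)
  have hrep := eq_cos_add_sinKernel_add_integral (k := k) hab hf hf' hg hfd
    fun s hs => (hf'd s hs).congr_deriv (by ring)
  have hkernel : |∫ s in a..b, sinKernel k (b - s) * g s| ≤ (b - a) * ∫ s in a..b, |g s| :=
    calc |∫ s in a..b, sinKernel k (b - s) * g s|
        ≤ ∫ s in a..b, |sinKernel k (b - s) * g s| :=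
          intervalIntegral.abs_integral_le_integral_abs hab
      _ ≤ ∫ s in a..b, (b - a) * |g s| := by
          refine intervalIntegral.integral_mono_on hab
            ((by fun_prop : ContinuousOn _ (Icc a b)).intervalIntegrable_of_Icc hab)
            ((by fun_prop : ContinuousOn _ (Icc a b)).intervalIntegrable_of_Icc hab)
            fun s hs => ?_
          rw [abs_mul]
          gcongr
          exact (abs_sinKernel_le k (sub_nonneg.2 hs.2)).trans (by linarith [hs.1])
      _ = (b - a) * ∫ s in a..b, |g s| := intervalIntegral.integral_const_mul _ _
  have hg_le : ∫ s in a..b, |g s| ≤ (b - a) * H + M * ∫ s in a..b, |f s| :=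
    calc ∫ s in a..b, |g s| ≤ ∫ s in a..b, (H + M * |f s|) := by
          refine intervalIntegral.integral_mono_on hab
            ((by fun_prop : ContinuousOn _ (Icc a b)).intervalIntegrable_of_Icc hab)
            ((by fun_prop : ContinuousOn _ (Icc a b)).intervalIntegrable_of_Icc hab)
            fun s hs => ?_
          calc |g s| ≤ |h s| + |W s| * |f s| := by
                rw [← abs_mul]
                exact abs_sub _ _
            _ ≤ H + M * |f s| := by gcongr <;> [exact hH s hs; exact hM s hs]
      _ = (b - a) * H + M * ∫ s in a..b, |f s| := by
          rw [intervalIntegral.integral_add intervalIntegrable_const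
              ((by fun_prop : ContinuousOn _ (Icc a b)).intervalIntegrable_of_Icc hab),
            intervalIntegral.integral_const, intervalIntegral.integral_const_mul, smul_eq_mul]
  have hcos : |f a * cos (k * (b - a))| ≤ |f a| := by
    rw [abs_mul]
    exact mul_le_of_le_one_right (abs_nonneg _) (abs_cos_le_one _)
  have hsin : |f' a * sinKernel k (b - a)| ≤ (b - a) * |f' a| := by
    rw [abs_mul, mul_comm]
    gcongr
    exact abs_sinKernel_le k (sub_nonneg.2 hab)
  calc |f b| ≤ |f a * cos (k * (b - a))| + |f' a * sinKernel k (b - a)| +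
        |∫ s in a..b, sinKernel k (b - s) * g s| := by
        rw [hrep]
        exact abs_add_three _ _ _
    _ ≤ |f a| + (b - a) * |f' a| + (b - a) * ((b - a) * H + M * ∫ s in a..b, |f s|) := by
        gcongr
        exact hkernel.trans (mul_le_mul_of_nonneg_left hg_le (sub_nonneg.2 hab))
    _ = |f a| + (b - a) * |f' a| + (b - a) ^ 2 * H + (b - a) * M * ∫ s in a..b, |f s| := by
        ring

lemma add_mul_gronwallBound_zero (K C x : ℝ) :
    C + K * gronwallBound 0 K C x = C * exp (K * x) := by
  rcases eq_or_ne K 0 with rfl | hK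
  · simp [gronwallBound_K0]
  · rw [gronwallBound_of_K_ne_0 hK]
    field_simp
    ring

lemma le_mul_exp_of_le_add_mul_integral {u : ℝ → ℝ} {a b C K : ℝ} (hab : a ≤ b) (hK : 0 ≤ K)
    (hu : ContinuousOn u (Icc a b)) (hle : ∀ x ∈ Icc a b, u x ≤ C + K * ∫ s in a..x, u s) :
    u b ≤ C * exp (K * (b - a)) := by
  -- a continuous extension of `u` to `ℝ`, so that its primitive is differentiable everywhere
  set v := IccExtend hab ((Icc a b).domRestrict u)
  have hv : Continuous v := (continuousOn_iff_continuous_domRestrict.1 hu).Icc_extend'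
  have hvu : ∀ x ∈ Icc a b, v x = u x := fun x hx => IccExtend_of_mem hab _ hx
  set F := fun x => ∫ s in a..x, v s
  have hF : ∀ x, HasDerivAt F (v x) x := fun x => (hv.integral_hasStrictDerivAt a x).hasDerivAt
  have hFu : ∀ x ∈ Icc a b, F x = ∫ s in a..x, u s := fun x hx =>
    intervalIntegral.integral_congr fun s hs =>
      hvu s (uIcc_subset_Icc (left_mem_Icc.2 hab) hx hs)
  have hFb : F b ≤ gronwallBound 0 K C (b - a) :=
    le_gronwallBound_of_liminf_deriv_right_le (f := F) (f' := v)
      (fun x _ => (hF x).continuousAt.continuousWithinAt)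
      (fun x _ _ hr => (hF x).hasDerivWithinAt.liminf_right_slope_le hr)
      (by simp [F])
      (fun x hx => by
        rw [hvu x (Ico_subset_Icc_self hx), hFu x (Ico_subset_Icc_self hx), add_comm]
        exact hle x (Ico_subset_Icc_self hx))
      b (right_mem_Icc.2 hab)
  calc u b ≤ C + K * ∫ s in a..b, u s := hle b (right_mem_Icc.2 hab)
    _ ≤ C + K * gronwallBound 0 K C (b - a) := by
        rw [← hFu b (right_mem_Icc.2 hab)]
        gcongr
    _ = C * exp (K * (b - a)) := add_mul_gronwallBound_zero K C (b - a)

lemma abs_le_iSup_abs_of_continuousOn {φ : ℝ → ℝ} {a b : ℝ} (hφ : ContinuousOn φ (Icc a b))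
    {x : ℝ} (hx : x ∈ Icc a b) : |φ x| ≤ ⨆ η : Icc a b, |φ η| := by
  refine le_ciSup (f := fun η : Icc a b => |φ η|) ?_ ⟨x, hx⟩
  simpa only [image_eq_range] using (isCompact_Icc.image_of_continuousOn hφ.abs).bddAbove

theorem stmt11_general (k τ₀ f₀ f₀' : ℝ) (W h f f' : ℝ → ℝ)
    (hW : ContinuousOn W (Set.Ici τ₀)) (hh : ContinuousOn h (Set.Ici τ₀))
    (hf : ∀ τ ∈ Set.Ici τ₀, HasDerivWithinAt f (f' τ) (Set.Ici τ₀) τ)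
    (hf' : ∀ τ ∈ Set.Ici τ₀,
      HasDerivWithinAt f' (h τ - (k ^ 2 + W τ) * f τ) (Set.Ici τ₀) τ)
    (hi0 : f τ₀ = f₀) (hi1 : f' τ₀ = f₀') :
    ∀ τ ∈ Set.Ici τ₀,
      |f τ| ≤ (|f₀| + (τ - τ₀) * |f₀'| +
          (τ - τ₀) ^ 2 * ⨆ η : Set.Icc τ₀ τ, |h (η : ℝ)|) *
        Real.exp ((τ - τ₀) ^ 2 * ⨆ η : Set.Icc τ₀ τ, |W (η : ℝ)|) := by
  subst hi0 hi1
  intro τ (hτ : τ₀ ≤ τ)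
  set H := ⨆ η : Icc τ₀ τ, |h η|
  set M := ⨆ η : Icc τ₀ τ, |W η|
  have hHb : ∀ s ∈ Icc τ₀ τ, |h s| ≤ H := fun s =>
    abs_le_iSup_abs_of_continuousOn (hh.mono Icc_subset_Ici_self)
  have hMb : ∀ s ∈ Icc τ₀ τ, |W s| ≤ M := fun s =>
    abs_le_iSup_abs_of_continuousOn (hW.mono Icc_subset_Ici_self)
  have hM : 0 ≤ M := (abs_nonneg _).trans (hMb τ₀ (left_mem_Icc.2 hτ))
  have hfc : ContinuousOn f (Ici τ₀) := fun s hs => (hf s hs).continuousWithinAt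
  have hf'c : ContinuousOn f' (Ici τ₀) := fun s hs => (hf' s hs).continuousWithinAt
  have hintegral : ∀ σ ∈ Icc τ₀ τ, |f σ| ≤ |f τ₀| + (τ - τ₀) * |f' τ₀| + (τ - τ₀) ^ 2 * H +
      (τ - τ₀) * M * ∫ s in τ₀..σ, |f s| := by
    rintro σ ⟨hτ₀σ, hστ⟩
    have hsub : Icc τ₀ σ ⊆ Ici τ₀ := Icc_subset_Ici_self
    have hpos : 0 ≤ ∫ s in τ₀..σ, |f s| :=
      intervalIntegral.integral_nonneg hτ₀σ fun _ _ => abs_nonneg _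
    have hH : 0 ≤ H := (abs_nonneg _).trans (hHb τ₀ (left_mem_Icc.2 hτ))
    calc |f σ| ≤ |f τ₀| + (σ - τ₀) * |f' τ₀| + (σ - τ₀) ^ 2 * H +
          (σ - τ₀) * M * ∫ s in τ₀..σ, |f s| :=
          abs_le_of_hasDerivAt_of_abs_le hτ₀σ (hW.mono hsub) (hh.mono hsub) (hfc.mono hsub)
            (hf'c.mono hsub) (fun s hs => (hf s hs.1.le).hasDerivAt (Ici_mem_nhds hs.1))
            (fun s hs => (hf' s hs.1.le).hasDerivAt (Ici_mem_nhds hs.1))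
            (fun s hs => hHb s ⟨hs.1, hs.2.trans hστ⟩) (fun s hs => hMb s ⟨hs.1, hs.2.trans hστ⟩)
      _ ≤ _ := by gcongr
  have hgronwall := le_mul_exp_of_le_add_mul_integral hτ
    (mul_nonneg (sub_nonneg.2 hτ) hM)
    (hfc.mono Icc_subset_Ici_self).abs hintegral
  rwa [show (τ - τ₀) * M * (τ - τ₀) = (τ - τ₀) ^ 2 * M by ring] at hgronwall

/-- Let `k ≥ 0`, `W, h` continuous on `[τ₀,∞)`, and `f ∈ C²([τ₀,∞))`
solving `f'' + (k² + W) f = h` with `f(τ₀) = f₀`, `f'(τ₀) = f₀'`. Then for every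
`τ ≥ τ₀`,
`|f(τ)| ≤ (|f₀| + (τ−τ₀)|f₀'| + (τ−τ₀)² sup_{[τ₀,τ]}|h|) · exp((τ−τ₀)² sup_{[τ₀,τ]}|W|)`. -/
theorem stmt11 (k τ₀ f₀ f₀' : ℝ) (hk : 0 ≤ k) (W h f f' : ℝ → ℝ)
    (hW : ContinuousOn W (Set.Ici τ₀)) (hh : ContinuousOn h (Set.Ici τ₀))
    (hf : ∀ τ ∈ Set.Ici τ₀, HasDerivWithinAt f (f' τ) (Set.Ici τ₀) τ)
    (hf' : ∀ τ ∈ Set.Ici τ₀,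
      HasDerivWithinAt f' (h τ - (k ^ 2 + W τ) * f τ) (Set.Ici τ₀) τ)
    (hi0 : f τ₀ = f₀) (hi1 : f' τ₀ = f₀') :
    ∀ τ ∈ Set.Ici τ₀,
      |f τ| ≤ (|f₀| + (τ - τ₀) * |f₀'| +
          (τ - τ₀) ^ 2 * ⨆ η : Set.Icc τ₀ τ, |h (η : ℝ)|) *
        Real.exp ((τ - τ₀) ^ 2 * ⨆ η : Set.Icc τ₀ τ, |W (η : ℝ)|) :=
  stmt11_general k τ₀ f₀ f₀' W h f f' hW hh hf hf' hi0 hi1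
end

section
/- Let k₀ > 0, τ₀ < τ₁, let V ∈ C¹([τ₀,τ₁];ℝ) with V(τ₀) = 0, and let χ be the C² complex-valued solution of χ'' + (k₀² + V) χ = 0 with χ(τ₀) = e^{i k₀ τ₀}/√(2k₀) and χ'(τ₀) = i k₀ e^{i k₀ τ₀}/√(2k₀). Then for every τ ∈ [τ₀,τ₁]: |χ(τ)| ≤ (1/√(2k₀)) · exp( ‖V‖_{1,[τ₀,τ]} / k₀ ) and |χ'(τ)| ≤ ( √(k₀/2) + ‖V'‖_{1,[τ₀,τ]} /(√2 · k₀^{3/2}) ) · exp( 2‖V‖_{1,[τ₀,τ]} / k₀ ), where ‖g‖_{1,[τ₀,τ]} = ∫_{τ₀}^{τ} |g(η)| dη. -/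
/-!
For the free equation (`V = 0`) the quantities `u = e^{ikτ}(χ' - ikχ)` and `v = e^{-ikτ}(χ' + ikχ)`
are constant; in general `u' = -e^{ikτ} V χ` and `v' = -e^{-ikτ} V χ`. Since
`2k|χ| ≤ |u| + |v|` and `2|χ'| ≤ |u| + |v|`, the quantity `N = |u| + |v|` satisfies
`N' ≤ (|V| / k) N`, and Grönwall's inequality gives `N(τ) ≤ N(τ₀) exp (‖V‖₁ / k)`, where
`N(τ₀) = √(2k)` for the plane-wave initial data.
-/

open MeasureTheory Real Set

section Gronwall

variable {E : Type*} [NormedAddCommGroup E] [NormedSpace ℝ E] {f f' : ℝ → E} {g : ℝ → ℝ}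
  {a b : ℝ}

theorem norm_le_mul_exp_integral_of_norm_deriv_right_le_of_continuous
    (hf : ContinuousOn f (Icc a b)) (hf' : ∀ x ∈ Ico a b, HasDerivWithinAt f (f' x) (Ici x) x)
    (hg : Continuous g) (bound : ∀ x ∈ Ico a b, ‖f' x‖ ≤ g x * ‖f x‖) :
    ∀ ⦃x⦄, x ∈ Icc a b → ‖f x‖ ≤ ‖f a‖ * exp (∫ t in a..x, g t) := by
  intro x hx
  set G : ℝ → ℝ := fun s => ∫ t in a..s, g t
  -- `(‖f a‖ + δ) exp (G s + δ (s - a))` is a strict upper solution; then let `δ → 0`.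
  have fence : ∀ δ > 0, ‖f x‖ ≤ (‖f a‖ + δ) * exp (G x + δ * (x - a)) := by
    intro δ hδ
    have hB : ∀ s, HasDerivAt (fun s => (‖f a‖ + δ) * exp (G s + δ * (s - a)))
        ((g s + δ) * ((‖f a‖ + δ) * exp (G s + δ * (s - a)))) s := by
      intro s
      have hG : HasDerivAt G (g s) s := (hg.integral_hasStrictDerivAt a s).hasDerivAt
      have hexponent : HasDerivAt (fun s => G s + δ * (s - a)) (g s + δ) s := by
        simpa using hG.fun_add (((hasDerivAt_id' s).sub_const a).const_mul δ)
      exact (hexponent.exp.const_mul _).congr_deriv (by ring)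
    refine image_norm_le_of_norm_deriv_right_lt_deriv_boundary hf hf' ?_ hB ?_ hx
    · simp [G, hδ.le]
    · intro s hs hfs
      have hpos : 0 < ‖f s‖ := hfs ▸ by positivity
      rw [← hfs]
      calc ‖f' s‖ ≤ g s * ‖f s‖ := bound s hs
        _ < (g s + δ) * ‖f s‖ := by nlinarith
  have hlim : Filter.Tendsto (fun δ => (‖f a‖ + δ) * exp (G x + δ * (x - a)))
      (nhdsWithin 0 (Ioi 0)) (nhds (‖f a‖ * exp (G x))) := by
    have hc : Continuous fun δ => (‖f a‖ + δ) * exp (G x + δ * (x - a)) := by fun_prop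
    simpa using (hc.tendsto 0).mono_left nhdsWithin_le_nhds
  exact ge_of_tendsto hlim (Filter.eventually_of_mem self_mem_nhdsWithin fence)

theorem norm_le_mul_exp_integral_of_norm_deriv_right_le
    (hf : ContinuousOn f (Icc a b)) (hf' : ∀ x ∈ Ico a b, HasDerivWithinAt f (f' x) (Ici x) x)
    (hg : ContinuousOn g (Icc a b)) (bound : ∀ x ∈ Ico a b, ‖f' x‖ ≤ g x * ‖f x‖) :
    ∀ ⦃x⦄, x ∈ Icc a b → ‖f x‖ ≤ ‖f a‖ * exp (∫ t in a..x, g t) := by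
  intro x hx
  have hab : a ≤ b := hx.1.trans hx.2
  obtain ⟨ĝ, hĝc, hĝ⟩ : ∃ ĝ : ℝ → ℝ, Continuous ĝ ∧ EqOn ĝ g (Icc a b) :=
    ⟨IccExtend hab ((Icc a b).domRestrict g),
      (continuousOn_iff_continuous_domRestrict.mp hg).Icc_extend',
      fun t ht => IccExtend_of_mem hab _ ht⟩
  have hĝx : ∫ t in a..x, ĝ t = ∫ t in a..x, g t := by
    refine intervalIntegral.integral_congr fun t ht => hĝ ?_
    rw [uIcc_of_le hx.1] at ht
    exact ⟨ht.1, ht.2.trans hx.2⟩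
  rw [← hĝx]
  refine norm_le_mul_exp_integral_of_norm_deriv_right_le_of_continuous hf hf' hĝc
    (fun s hs => ?_) hx
  rw [hĝ (Ico_subset_Icc_self hs)]
  exact bound s hs

end Gronwall

section ModeAmplitudes

open Complex

theorem norm_cexp_I_mul_mul (k t : ℝ) : ‖cexp (I * k * t)‖ = 1 := by
  rw [mul_assoc, ← ofReal_mul, norm_exp_I_mul_ofReal]

theorem norm_cexp_neg_I_mul_mul (k t : ℝ) : ‖cexp (-(I * k * t))‖ = 1 := by
  rw [Complex.exp_neg, norm_inv, norm_cexp_I_mul_mul, inv_one]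

theorem hasDerivAt_cexp_mul_ofReal (c : ℂ) (t : ℝ) :
    HasDerivAt (fun s : ℝ => cexp (c * s)) (c * cexp (c * t)) t := by
  simpa [mul_comm c] using ((hasDerivAt_id (t : ℂ)).const_mul c).cexp.comp_ofReal

variable {k : ℝ} {χ χ' : ℝ → ℂ} {t : ℝ}

/-- Variation of constants: for `χ = α e^{ikt} + β e^{-ikt}` the two components are `-2ikβ` and
`2ikα`. -/
noncomputable def modeAmplitudes (k : ℝ) (χ χ' : ℝ → ℂ) (t : ℝ) : WithLp 1 (ℂ × ℂ) :=
  WithLp.toLp 1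
    (cexp (I * k * t) * (χ' t - I * k * χ t), cexp (-(I * k * t)) * (χ' t + I * k * χ t))

theorem norm_modeAmplitudes :
    ‖modeAmplitudes k χ χ' t‖ = ‖χ' t - I * k * χ t‖ + ‖χ' t + I * k * χ t‖ := by
  rw [WithLp.prod_norm_eq_of_L1]
  simp [modeAmplitudes, norm_cexp_I_mul_mul, norm_cexp_neg_I_mul_mul]

theorem two_mul_norm_le_norm_modeAmplitudes (hk : 0 ≤ k) :
    2 * k * ‖χ t‖ ≤ ‖modeAmplitudes k χ χ' t‖ := by
  rw [norm_modeAmplitudes]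
  calc 2 * k * ‖χ t‖ = ‖(χ' t + I * k * χ t) - (χ' t - I * k * χ t)‖ := by
        rw [show (χ' t + I * k * χ t) - (χ' t - I * k * χ t) = 2 * I * k * χ t by ring]
        simp [abs_of_nonneg hk]
    _ ≤ ‖χ' t - I * k * χ t‖ + ‖χ' t + I * k * χ t‖ :=
        (norm_sub_le _ _).trans_eq (add_comm _ _)

theorem two_mul_norm_deriv_le_norm_modeAmplitudes :
    2 * ‖χ' t‖ ≤ ‖modeAmplitudes k χ χ' t‖ := by
  rw [norm_modeAmplitudes]
  calc 2 * ‖χ' t‖ = ‖(χ' t - I * k * χ t) + (χ' t + I * k * χ t)‖ := by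
        rw [show (χ' t - I * k * χ t) + (χ' t + I * k * χ t) = 2 * χ' t by ring]
        simp
    _ ≤ ‖χ' t - I * k * χ t‖ + ‖χ' t + I * k * χ t‖ := norm_add_le _ _

theorem norm_modeAmplitudes_of_planeWave (hk : 0 < k)
    (h₀ : χ t = cexp (I * k * t) / (√(2 * k) : ℂ))
    (h₁ : χ' t = I * k * cexp (I * k * t) / (√(2 * k) : ℂ)) :
    ‖modeAmplitudes k χ χ' t‖ = √(2 * k) := by
  have hs : 0 < √(2 * k) := by positivity
  have hχ : ‖χ t‖ = 1 / √(2 * k) := by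
    rw [h₀, norm_div, norm_cexp_I_mul_mul, norm_real, norm_of_nonneg hs.le]
  have hu : χ' t - I * k * χ t = 0 := by rw [h₀, h₁]; ring
  rw [norm_modeAmplitudes, hu, norm_zero, zero_add,
    show χ' t + I * k * χ t = 2 * I * k * χ t by linear_combination hu]
  simp only [norm_mul, hχ, norm_I, Complex.norm_two, norm_real, norm_of_nonneg hk.le]
  field_simp
  rw [sq_sqrt (by positivity)]

theorem hasDerivWithinAt_modeAmplitudes {V : ℝ → ℝ} {s : Set ℝ}
    (hχ : HasDerivWithinAt χ (χ' t) s t)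
    (hχ' : HasDerivWithinAt χ' (-((k ^ 2 + V t : ℝ) : ℂ) * χ t) s t) :
    HasDerivWithinAt (modeAmplitudes k χ χ')
      (-(V t * χ t : ℂ) • WithLp.toLp 1 (cexp (I * k * t), cexp (-(I * k * t)))) s t := by
  have hu := (hasDerivAt_cexp_mul_ofReal (I * k) t).hasDerivWithinAt.mul
    (hχ'.sub (hχ.const_mul (I * k)))
  have hv := (hasDerivAt_cexp_mul_ofReal (-(I * k)) t).hasDerivWithinAt.mul
    (hχ'.add (hχ.const_mul (I * k)))
  simp only [neg_mul] at hv
  refine ((WithLp.prodContinuousLinearEquiv 1 ℝ ℂ ℂ).symm.hasFDerivAt.comp_hasDerivWithinAt t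
    (hu.prodMk hv)).congr_deriv ?_
  rw [ContinuousLinearEquiv.coe_coe, WithLp.prodContinuousLinearEquiv_symm_apply,
    ← WithLp.toLp_smul]
  congr 1
  refine Prod.ext ?_ ?_
  · simp only [Pi.sub_apply, Prod.smul_mk, smul_eq_mul]
    push_cast
    linear_combination (-k ^ 2 * cexp (I * k * t) * χ t) * I_mul_I
  · simp only [Pi.add_apply, Prod.smul_mk, smul_eq_mul]
    push_cast
    linear_combination (-k ^ 2 * cexp (-(I * k * t)) * χ t) * I_mul_I

theorem norm_modeAmplitudes_le {V : ℝ → ℝ} {a b : ℝ} (hk : 0 < k)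
    (hV : ContinuousOn V (Icc a b))
    (hχ : ∀ t ∈ Icc a b, HasDerivWithinAt χ (χ' t) (Icc a b) t)
    (hχ' : ∀ t ∈ Icc a b, HasDerivWithinAt χ' (-((k ^ 2 + V t : ℝ) : ℂ) * χ t) (Icc a b) t) :
    ∀ ⦃t⦄, t ∈ Icc a b →
      ‖modeAmplitudes k χ χ' t‖ ≤
        ‖modeAmplitudes k χ χ' a‖ * Real.exp ((∫ s in a..t, |V s|) / k) := by
  have hF t (ht : t ∈ Icc a b) := hasDerivWithinAt_modeAmplitudes (hχ t ht) (hχ' t ht)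
  intro t ht
  rw [← intervalIntegral.integral_div]
  refine norm_le_mul_exp_integral_of_norm_deriv_right_le
    (fun s hs => (hF s hs).continuousWithinAt)
    (fun s hs =>
      (hF s (Ico_subset_Icc_self hs)).mono_of_mem_nhdsWithin (Icc_mem_nhdsGE_of_mem hs))
    (hV.abs.div_const k) (fun s _ => ?_) ht
  have hphases : ‖WithLp.toLp 1 (cexp (I * k * s), cexp (-(I * k * s)))‖ = 2 := by
    rw [WithLp.prod_norm_eq_of_L1]
    simp only [WithLp.toLp_fst, WithLp.toLp_snd, norm_cexp_I_mul_mul, norm_cexp_neg_I_mul_mul]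
    norm_num
  calc ‖-(V s * χ s : ℂ) • WithLp.toLp 1 (cexp (I * k * s), cexp (-(I * k * s)))‖
      = |V s| / k * (2 * k * ‖χ s‖) := by
        rw [norm_smul, hphases, norm_neg, norm_mul, norm_real, Real.norm_eq_abs]
        field_simp
    _ ≤ |V s| / k * ‖modeAmplitudes k χ χ' s‖ := by
        gcongr
        exact two_mul_norm_le_norm_modeAmplitudes hk.le

end ModeAmplitudes

theorem sqrt_two_mul_eq_two_mul_sqrt_div_two (k : ℝ) : √(2 * k) = 2 * √(k / 2) := by
  rw [show 2 * k = 2 ^ 2 * (k / 2) by ring, sqrt_mul (by positivity), sqrt_sq zero_le_two]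

theorem stmt17_general (k₀ τ₀ τ₁ : ℝ) (hk : 0 < k₀) (V V' : ℝ → ℝ)
    (hV : ∀ τ ∈ Set.Icc τ₀ τ₁, HasDerivWithinAt V (V' τ) (Set.Icc τ₀ τ₁) τ)
    (χ χ' : ℝ → ℂ)
    (hχ : ∀ τ ∈ Set.Icc τ₀ τ₁, HasDerivWithinAt χ (χ' τ) (Set.Icc τ₀ τ₁) τ)
    (hχ' : ∀ τ ∈ Set.Icc τ₀ τ₁,
      HasDerivWithinAt χ' (-(((k₀ ^ 2 + V τ : ℝ)) : ℂ) * χ τ) (Set.Icc τ₀ τ₁) τ)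
    (hi0 : χ τ₀ = Complex.exp (Complex.I * k₀ * τ₀) / (Real.sqrt (2 * k₀) : ℂ))
    (hi1 : χ' τ₀ = Complex.I * k₀ * Complex.exp (Complex.I * k₀ * τ₀) / (Real.sqrt (2 * k₀) : ℂ)) :
    ∀ τ ∈ Set.Icc τ₀ τ₁,
      ‖χ τ‖ ≤ (1 / Real.sqrt (2 * k₀)) *
          Real.exp ((∫ η in τ₀..τ, |V η|) / k₀) ∧
      ‖χ' τ‖ ≤
        (Real.sqrt (k₀ / 2) +
            (∫ η in τ₀..τ, |V' η|) / (Real.sqrt 2 * k₀ ^ ((3:ℝ) / 2))) *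
          Real.exp (2 * (∫ η in τ₀..τ, |V η|) / k₀) := by
  intro τ hτ
  have hF := norm_modeAmplitudes_le hk (fun x hx => (hV x hx).continuousWithinAt) hχ hχ' hτ
  rw [norm_modeAmplitudes_of_planeWave hk hi0 hi1] at hF
  have hχF := two_mul_norm_le_norm_modeAmplitudes hk.le (χ := χ) (χ' := χ') (t := τ)
  have hχ'F := two_mul_norm_deriv_le_norm_modeAmplitudes (k := k₀) (χ := χ) (χ' := χ') (t := τ)
  set A := ∫ η in τ₀..τ, |V η|
  have hA : 0 ≤ A := intervalIntegral.integral_nonneg hτ.1 fun _ _ => abs_nonneg _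
  have hV'A : 0 ≤ (∫ η in τ₀..τ, |V' η|) / (√2 * k₀ ^ ((3:ℝ) / 2)) := by
    have : 0 ≤ ∫ η in τ₀..τ, |V' η| :=
      intervalIntegral.integral_nonneg hτ.1 fun _ _ => abs_nonneg _
    positivity
  constructor
  · calc ‖χ τ‖ ≤ √(2 * k₀) * exp (A / k₀) / (2 * k₀) := by
          rw [le_div_iff₀ (by positivity)]; linarith
      _ = 1 / √(2 * k₀) * exp (A / k₀) := by
          field_simp
          rw [sq_sqrt (by positivity)]
  · calc ‖χ' τ‖ ≤ √(k₀ / 2) * exp (A / k₀) := by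
          rw [sqrt_two_mul_eq_two_mul_sqrt_div_two] at hF; linarith
      _ ≤ √(k₀ / 2) * exp (2 * A / k₀) := by gcongr; linarith
      _ ≤ (√(k₀ / 2) + (∫ η in τ₀..τ, |V' η|) / (√2 * k₀ ^ ((3:ℝ) / 2))) *
            exp (2 * A / k₀) := by
          gcongr; linarith

/-- Let `k₀ > 0`, `τ₀ < τ₁`, `V ∈ C¹([τ₀,τ₁])` with `V(τ₀) = 0`, and let
`χ` be the `C²` complex solution of `χ'' + (k₀² + V)χ = 0` with
`χ(τ₀) = e^{i k₀ τ₀}/√(2k₀)`, `χ'(τ₀) = i k₀ e^{i k₀ τ₀}/√(2k₀)`. Then for all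
`τ ∈ [τ₀,τ₁]`:
`|χ(τ)| ≤ (1/√(2k₀)) exp(‖V‖₁/k₀)` and
`|χ'(τ)| ≤ (√(k₀/2) + ‖V'‖₁/(√2 k₀^{3/2})) exp(2‖V‖₁/k₀)`,
where `‖g‖₁ = ∫_{τ₀}^{τ} |g|`. -/
theorem stmt17 (k₀ τ₀ τ₁ : ℝ) (hk : 0 < k₀) (hτ : τ₀ < τ₁) (V V' : ℝ → ℝ)
    (hV : ∀ τ ∈ Set.Icc τ₀ τ₁, HasDerivWithinAt V (V' τ) (Set.Icc τ₀ τ₁) τ)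
    (hV' : ContinuousOn V' (Set.Icc τ₀ τ₁)) (hV0 : V τ₀ = 0)
    (χ χ' : ℝ → ℂ)
    (hχ : ∀ τ ∈ Set.Icc τ₀ τ₁, HasDerivWithinAt χ (χ' τ) (Set.Icc τ₀ τ₁) τ)
    (hχ' : ∀ τ ∈ Set.Icc τ₀ τ₁,
      HasDerivWithinAt χ' (-(((k₀ ^ 2 + V τ : ℝ)) : ℂ) * χ τ) (Set.Icc τ₀ τ₁) τ)
    (hi0 : χ τ₀ = Complex.exp (Complex.I * k₀ * τ₀) / (Real.sqrt (2 * k₀) : ℂ))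
    (hi1 : χ' τ₀ = Complex.I * k₀ * Complex.exp (Complex.I * k₀ * τ₀) / (Real.sqrt (2 * k₀) : ℂ)) :
    ∀ τ ∈ Set.Icc τ₀ τ₁,
      ‖χ τ‖ ≤ (1 / Real.sqrt (2 * k₀)) *
          Real.exp ((∫ η in τ₀..τ, |V η|) / k₀) ∧
      ‖χ' τ‖ ≤
        (Real.sqrt (k₀ / 2) +
            (∫ η in τ₀..τ, |V' η|) / (Real.sqrt 2 * k₀ ^ ((3:ℝ) / 2))) *
          Real.exp (2 * (∫ η in τ₀..τ, |V η|) / k₀) :=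
  stmt17_general k₀ τ₀ τ₁ hk V V' hV χ χ' hχ hχ' hi0 hi1
end

section
/- Let k₀ > 0, τ₀ < τ₁, let V ∈ C¹([τ₀,τ₁];ℝ) with V(τ₀) = 0, let χ be the C² complex-valued solution of χ'' + (k₀² + V) χ = 0 with χ(τ₀) = e^{i k₀ τ₀}/√(2k₀) and χ'(τ₀) = i k₀ e^{i k₀ τ₀}/√(2k₀), and set χ⁰(τ) = e^{i k₀ τ}/√(2k₀). Then for every τ ∈ [τ₀,τ₁]: |χ(τ) − χ⁰(τ)| ≤ ( ‖V‖_{1,[τ₀,τ]} /(√2 · k₀^{3/2}) ) · exp( ‖V‖_{1,[τ₀,τ]} / k₀ ) and |χ'(τ) − (χ⁰)'(τ)| ≤ ( ‖V‖_{1,[τ₀,τ]} /√(2k₀) + ‖V'‖_{1,[τ₀,τ]} /(√2 · k₀^{3/2}) ) · exp( 2‖V‖_{1,[τ₀,τ]} / k₀ ), where ‖g‖_{1,[τ₀,τ]} = ∫_{τ₀}^{τ} |g(η)| dη. -/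
/-!
The difference `u = χ - χ⁰` solves `u'' + k₀² u = -V χ` with `u(τ₀) = u'(τ₀) = 0`. Its energy
`k₀² ‖u‖² + ‖u'‖²` has derivative `-2 V ⟪u', χ⟫`, and `‖χ‖ ≤ ‖χ⁰‖ + ‖u‖ = (2k₀)^{-1/2} + ‖u‖`, so the
square root `N` of the energy satisfies `N' ≤ (|V| / k₀) (N + √(k₀/2))`. Gronwall's lemma with the
variable rate `|V| / k₀` gives `N ≤ √(k₀/2) (exp (‖V‖₁ / k₀) - 1) ≤ ‖V‖₁ / √(2k₀) · exp (‖V‖₁ / k₀)`,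
which bounds both `k₀ ‖u‖` and `‖u'‖`. Since `N` need not be differentiable where the energy
vanishes, the argument is run for `√(energy + ε²)` and `ε → 0` at the end.
-/

open Real Set
open scoped RealInnerProductSpace

theorem le_mul_exp_sub_of_hasDerivWithinAt_le_mul {f f' β β' : ℝ → ℝ} {a b : ℝ}
    (hf : ∀ x ∈ Icc a b, HasDerivWithinAt f (f' x) (Icc a b) x)
    (hβ : ∀ x ∈ Icc a b, HasDerivWithinAt β (β' x) (Icc a b) x)
    (hle : ∀ x ∈ Icc a b, f' x ≤ β' x * f x) :
    ∀ x ∈ Icc a b, f x ≤ f a * exp (β x - β a) := by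
  have hderiv : ∀ y ∈ Icc a b, HasDerivWithinAt (fun y => f y * exp (-β y))
      (exp (-β y) * (f' y - β' y * f y)) (Icc a b) y := fun y hy =>
    ((hf y hy).mul (hβ y hy).neg.exp).congr_deriv (by simp only [Pi.neg_apply]; ring)
  have hanti : AntitoneOn (fun y => f y * exp (-β y)) (Icc a b) := by
    refine antitoneOn_of_hasDerivWithinAt_nonpos (convex_Icc a b)
      (fun y hy => (hderiv y hy).continuousWithinAt)
      (fun y hy => (hderiv y (interior_subset hy)).mono interior_subset) fun y hy => ?_
    exact mul_nonpos_of_nonneg_of_nonpos (exp_pos _).le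
      (sub_nonpos.2 (hle y (interior_subset hy)))
  intro x hx
  have hax := hanti (left_mem_Icc.2 (hx.1.trans hx.2)) hx hx.1
  calc f x = f x * exp (-β x) * exp (β x) := by rw [mul_assoc, ← exp_add]; simp
    _ ≤ f a * exp (-β a) * exp (β x) := by gcongr
    _ = f a * exp (β x - β a) := by rw [mul_assoc, ← exp_add, neg_add_eq_sub]

theorem ContinuousOn.hasDerivWithinAt_integral_Icc {F : Type*} [NormedAddCommGroup F]
    [NormedSpace ℝ F] [CompleteSpace F] {g : ℝ → F} {a b x : ℝ}
    (hg : ContinuousOn g (Icc a b)) (hx : x ∈ Icc a b) :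
    HasDerivWithinAt (fun t => ∫ s in a..t, g s) (g x) (Icc a b) x := by
  have : Fact (x ∈ Icc a b) := ⟨hx⟩
  refine intervalIntegral.integral_hasDerivWithinAt_right ?_
    (hg.stronglyMeasurableAtFilter_nhdsWithin measurableSet_Icc x) (hg x hx)
  refine (hg.mono ?_).intervalIntegrable
  rw [uIcc_of_le hx.1]
  exact Icc_subset_Icc_right hx.2

theorem Real.exp_sub_one_le_mul_exp (x : ℝ) : exp x - 1 ≤ x * exp x := by
  have h := mul_le_mul_of_nonneg_right (add_one_le_exp (-x)) (exp_pos x).le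
  rw [← exp_add, neg_add_cancel, exp_zero] at h
  linarith

variable {E : Type*} [NormedAddCommGroup E]

def oscillatorEnergy (k : ℝ) (u v : E) : ℝ := k ^ 2 * ‖u‖ ^ 2 + ‖v‖ ^ 2

theorem mul_norm_le_sqrt_oscillatorEnergy (k : ℝ) (u v : E) :
    k * ‖u‖ ≤ √(oscillatorEnergy k u v) :=
  le_sqrt_of_sq_le (by unfold oscillatorEnergy; nlinarith [sq_nonneg ‖v‖])

theorem norm_le_sqrt_oscillatorEnergy (k : ℝ) (u v : E) : ‖v‖ ≤ √(oscillatorEnergy k u v) :=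
  le_sqrt_of_sq_le (by unfold oscillatorEnergy; nlinarith [sq_nonneg (k * ‖u‖)])

theorem sqrt_oscillatorEnergy_le_sqrt_add_sq (k ε : ℝ) (u v : E) :
    √(oscillatorEnergy k u v) ≤ √(oscillatorEnergy k u v + ε ^ 2) :=
  sqrt_le_sqrt (le_add_of_nonneg_right (sq_nonneg ε))

variable [InnerProductSpace ℝ E]

theorem HasDerivWithinAt.oscillatorEnergy {k : ℝ} {u v w : ℝ → E} {V : ℝ → ℝ} {s : Set ℝ}
    {x : ℝ} (hu : HasDerivWithinAt u (v x) s x)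
    (hv : HasDerivWithinAt v (-(k ^ 2 • u x) - V x • w x) s x) :
    HasDerivWithinAt (fun y => oscillatorEnergy k (u y) (v y)) (-(2 * V x * ⟪v x, w x⟫)) s x := by
  refine ((hu.norm_sq.const_mul (k ^ 2)).add hv.norm_sq).congr_deriv ?_
  simp only [inner_sub_right, inner_neg_right, real_inner_smul_right, real_inner_comm (u x) (v x)]
  ring

theorem neg_mul_inner_div_le_of_norm_le {k c ε t : ℝ} {u v w : E} (hk : 0 < k) (hε : 0 < ε)
    (hw : ‖w‖ ≤ c + ‖u‖) :
    -(2 * t * ⟪v, w⟫) / (2 * √(oscillatorEnergy k u v + ε ^ 2))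
      ≤ |t| / k * (√(oscillatorEnergy k u v + ε ^ 2) + c * k) := by
  set g := √(oscillatorEnergy k u v + ε ^ 2)
  have hg : 0 < g := sqrt_pos.2 (by unfold oscillatorEnergy; positivity)
  have hug : ‖u‖ ≤ g / k := by
    rw [le_div_iff₀ hk, mul_comm]
    exact (mul_norm_le_sqrt_oscillatorEnergy k u v).trans
      (sqrt_oscillatorEnergy_le_sqrt_add_sq k ε u v)
  rw [div_le_iff₀ (by positivity)]
  calc -(2 * t * ⟪v, w⟫) ≤ |2 * t * ⟪v, w⟫| := neg_le_abs _
    _ = 2 * |t| * |⟪v, w⟫| := by rw [abs_mul, abs_mul, abs_two]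
    _ ≤ 2 * |t| * (g * (c + g / k)) := by
        gcongr
        refine (abs_real_inner_le_norm v w).trans (mul_le_mul ?_ ?_ (norm_nonneg w) hg.le)
        exacts [(norm_le_sqrt_oscillatorEnergy k u v).trans
          (sqrt_oscillatorEnergy_le_sqrt_add_sq k ε u v), by linarith]
    _ = |t| / k * (g + c * k) * (2 * g) := by field_simp; ring

section

variable {k c a b : ℝ} {V : ℝ → ℝ} {u v w : ℝ → E}

theorem sqrt_oscillatorEnergy_add_sq_le (hk : 0 < k) {ε : ℝ} (hε : 0 < ε)
    (hV : ContinuousOn V (Icc a b))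
    (hu : ∀ x ∈ Icc a b, HasDerivWithinAt u (v x) (Icc a b) x)
    (hv : ∀ x ∈ Icc a b, HasDerivWithinAt v (-(k ^ 2 • u x) - V x • w x) (Icc a b) x)
    (hw : ∀ x ∈ Icc a b, ‖w x‖ ≤ c + ‖u x‖) (hu0 : u a = 0) (hv0 : v a = 0) :
    ∀ x ∈ Icc a b, √(oscillatorEnergy k (u x) (v x) + ε ^ 2)
      ≤ ε * exp ((∫ t in a..x, |V t|) / k) + c * k * (exp ((∫ t in a..x, |V t|) / k) - 1) := by
  set g := fun x => √(oscillatorEnergy k (u x) (v x) + ε ^ 2)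
  have hg : ∀ x ∈ Icc a b,
      HasDerivWithinAt g (-(2 * V x * ⟪v x, w x⟫) / (2 * g x)) (Icc a b) x := fun x hx =>
    (((hu x hx).oscillatorEnergy (hv x hx)).add_const _).sqrt
      (by unfold oscillatorEnergy; positivity)
  have hA : ∀ x ∈ Icc a b,
      HasDerivWithinAt (fun x => (∫ t in a..x, |V t|) / k) (|V x| / k) (Icc a b) x :=
    fun x hx => (hV.abs.hasDerivWithinAt_integral_Icc hx).div_const k
  intro x hx
  have := le_mul_exp_sub_of_hasDerivWithinAt_le_mul (f := fun x => g x + c * k)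
    (fun x hx => (hg x hx).add_const _) hA
    (fun x hx => neg_mul_inner_div_le_of_norm_le hk hε (hw x hx)) x hx
  have hga : g a = ε := by simp [g, oscillatorEnergy, hu0, hv0, hε.le]
  simp only [hga, intervalIntegral.integral_same, zero_div, sub_zero] at this
  linarith

theorem sqrt_oscillatorEnergy_le (hk : 0 < k) (hV : ContinuousOn V (Icc a b))
    (hu : ∀ x ∈ Icc a b, HasDerivWithinAt u (v x) (Icc a b) x)
    (hv : ∀ x ∈ Icc a b, HasDerivWithinAt v (-(k ^ 2 • u x) - V x • w x) (Icc a b) x)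
    (hw : ∀ x ∈ Icc a b, ‖w x‖ ≤ c + ‖u x‖) (hu0 : u a = 0) (hv0 : v a = 0) :
    ∀ x ∈ Icc a b, √(oscillatorEnergy k (u x) (v x))
      ≤ c * k * (exp ((∫ t in a..x, |V t|) / k) - 1) := by
  intro x hx
  set B := exp ((∫ t in a..x, |V t|) / k)
  refine le_of_forall_pos_le_add fun δ hδ => ?_
  have hε : 0 < δ / B := div_pos hδ (exp_pos _)
  calc √(oscillatorEnergy k (u x) (v x))
      ≤ √(oscillatorEnergy k (u x) (v x) + (δ / B) ^ 2) :=
        sqrt_oscillatorEnergy_le_sqrt_add_sq _ _ _ _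
    _ ≤ δ / B * B + c * k * (B - 1) :=
        sqrt_oscillatorEnergy_add_sq_le hk hε hV hu hv hw hu0 hv0 x hx
    _ = c * k * (B - 1) + δ := by rw [div_mul_cancel₀ δ (exp_pos _).ne']; ring

end

noncomputable def freeMode (k t : ℝ) : ℂ := Complex.exp (Complex.I * k * t) / (√(2 * k) : ℂ)

theorem hasDerivAt_freeMode (k t : ℝ) :
    HasDerivAt (freeMode k) (Complex.I * k * freeMode k t) t := by
  have h := (((hasDerivAt_id (t : ℂ)).const_mul (Complex.I * k)).cexp.comp_ofReal).div_const
    (√(2 * k) : ℂ)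
  exact h.congr_deriv (by simp only [freeMode, id]; ring)

theorem norm_freeMode (k t : ℝ) : ‖freeMode k t‖ = (√(2 * k))⁻¹ := by
  rw [freeMode, norm_div, show Complex.I * k * t = (k * t : ℝ) * Complex.I by push_cast; ring,
    Complex.norm_exp_ofReal_mul_I, Complex.norm_real, norm_of_nonneg (sqrt_nonneg _), one_div]

theorem sqrt_two_mul_rpow_three_halves {k : ℝ} (hk : 0 ≤ k) :
    √2 * k ^ ((3 : ℝ) / 2) = √(2 * k) * k := by
  rw [sqrt_mul zero_le_two, show (3 : ℝ) / 2 = 1 / 2 + 1 by norm_num, rpow_add' hk (by norm_num),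
    rpow_one, ← sqrt_eq_rpow, mul_assoc]

theorem sqrt_oscillatorEnergy_sub_freeMode_le {k a b : ℝ} (hk : 0 < k) {V : ℝ → ℝ}
    (hV : ContinuousOn V (Icc a b)) {χ χ' : ℝ → ℂ}
    (hχ : ∀ x ∈ Icc a b, HasDerivWithinAt χ (χ' x) (Icc a b) x)
    (hχ' : ∀ x ∈ Icc a b,
      HasDerivWithinAt χ' (-(((k ^ 2 + V x : ℝ)) : ℂ) * χ x) (Icc a b) x)
    (hχa : χ a = freeMode k a) (hχ'a : χ' a = Complex.I * k * freeMode k a) :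
    ∀ x ∈ Icc a b,
      √(oscillatorEnergy k (χ x - freeMode k x) (χ' x - Complex.I * k * freeMode k x))
        ≤ (∫ t in a..x, |V t|) / √(2 * k) * exp ((∫ t in a..x, |V t|) / k) := by
  intro x hx
  set A := ∫ t in a..x, |V t|
  have hexp : k * (exp (A / k) - 1) ≤ A * exp (A / k) := by
    have := mul_le_mul_of_nonneg_left (exp_sub_one_le_mul_exp (A / k)) hk.le
    rwa [← mul_assoc, mul_div_cancel₀ A hk.ne'] at this
  refine (sqrt_oscillatorEnergy_le (u := fun y => χ y - freeMode k y)
    (v := fun y => χ' y - Complex.I * k * freeMode k y) (w := χ) (c := (√(2 * k))⁻¹) hk hV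
    (fun y hy => (hχ y hy).sub (hasDerivAt_freeMode k y).hasDerivWithinAt)
    (fun y hy => ((hχ' y hy).sub
      ((hasDerivAt_freeMode k y).const_mul _).hasDerivWithinAt).congr_deriv ?_)
    (fun y _ => ?_) (sub_eq_zero.2 hχa) (sub_eq_zero.2 hχ'a) x hx).trans ?_
  · simp only [Complex.real_smul]
    push_cast
    linear_combination -(k ^ 2 * freeMode k y) * Complex.I_sq
  · simpa [norm_freeMode] using norm_le_norm_add_norm_sub' (χ y) (freeMode k y)
  · rw [mul_assoc, div_mul_eq_mul_div, inv_mul_eq_div]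
    gcongr

theorem stmt18_general (k₀ τ₀ τ₁ : ℝ) (hk : 0 < k₀) (V V' : ℝ → ℝ)
    (hV : ∀ τ ∈ Set.Icc τ₀ τ₁, HasDerivWithinAt V (V' τ) (Set.Icc τ₀ τ₁) τ)
    (χ χ' : ℝ → ℂ)
    (hχ : ∀ τ ∈ Set.Icc τ₀ τ₁, HasDerivWithinAt χ (χ' τ) (Set.Icc τ₀ τ₁) τ)
    (hχ' : ∀ τ ∈ Set.Icc τ₀ τ₁,
      HasDerivWithinAt χ' (-(((k₀ ^ 2 + V τ : ℝ)) : ℂ) * χ τ) (Set.Icc τ₀ τ₁) τ)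
    (hi0 : χ τ₀ = Complex.exp (Complex.I * k₀ * τ₀) / (Real.sqrt (2 * k₀) : ℂ))
    (hi1 : χ' τ₀ = Complex.I * k₀ * Complex.exp (Complex.I * k₀ * τ₀) / (Real.sqrt (2 * k₀) : ℂ)) :
    ∀ τ ∈ Set.Icc τ₀ τ₁,
      ‖χ τ - Complex.exp (Complex.I * k₀ * τ) / (Real.sqrt (2 * k₀) : ℂ)‖
        ≤ ((∫ η in τ₀..τ, |V η|) / (Real.sqrt 2 * k₀ ^ ((3:ℝ) / 2))) *
            Real.exp ((∫ η in τ₀..τ, |V η|) / k₀) ∧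
      ‖χ' τ -
          Complex.I * k₀ * Complex.exp (Complex.I * k₀ * τ) / (Real.sqrt (2 * k₀) : ℂ)‖
        ≤ ((∫ η in τ₀..τ, |V η|) / Real.sqrt (2 * k₀) +
              (∫ η in τ₀..τ, |V' η|) / (Real.sqrt 2 * k₀ ^ ((3:ℝ) / 2))) *
            Real.exp (2 * (∫ η in τ₀..τ, |V η|) / k₀) := by
  intro τ hτ
  have hE := sqrt_oscillatorEnergy_sub_freeMode_le hk
    (fun σ hσ => (hV σ hσ).continuousWithinAt) hχ hχ' hi0 (by rw [hi1, mul_div_assoc]; rfl) τ hτ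
  set r := √(2 * k₀)
  set A := ∫ η in τ₀..τ, |V η|
  have hA : 0 ≤ A := intervalIntegral.integral_nonneg hτ.1 fun _ _ => abs_nonneg _
  rw [sqrt_two_mul_rpow_three_halves hk.le, mul_div_assoc]
  constructor
  · calc ‖χ τ - freeMode k₀ τ‖ = k₀ * ‖χ τ - freeMode k₀ τ‖ / k₀ := by field_simp
      _ ≤ A / r * exp (A / k₀) / k₀ := by
          gcongr ?_ / _
          exact (mul_norm_le_sqrt_oscillatorEnergy _ _ _).trans hE
      _ = A / (r * k₀) * exp (A / k₀) := by field_simp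
  · calc ‖χ' τ - Complex.I * k₀ * freeMode k₀ τ‖ ≤ A / r * exp (A / k₀) :=
          (norm_le_sqrt_oscillatorEnergy _ _ _).trans hE
      _ ≤ A / r * exp (2 * A / k₀) := by gcongr; linarith
      _ ≤ (A / r + (∫ η in τ₀..τ, |V' η|) / (r * k₀)) * exp (2 * A / k₀) := by
          gcongr
          exact le_add_of_nonneg_right (div_nonneg
            (intervalIntegral.integral_nonneg hτ.1 fun _ _ => abs_nonneg _) (by positivity))

/-- With the hypotheses of Statement 17 and `χ⁰(τ) = e^{i k₀ τ}/√(2k₀)`,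
for all `τ ∈ [τ₀,τ₁]`:
`|χ(τ) − χ⁰(τ)| ≤ (‖V‖₁/(√2 k₀^{3/2})) exp(‖V‖₁/k₀)` and
`|χ'(τ) − (χ⁰)'(τ)| ≤ (‖V‖₁/√(2k₀) + ‖V'‖₁/(√2 k₀^{3/2})) exp(2‖V‖₁/k₀)`,
where `‖g‖₁ = ∫_{τ₀}^{τ} |g|` and `(χ⁰)'(τ) = i k₀ e^{i k₀ τ}/√(2k₀)`. -/
theorem stmt18 (k₀ τ₀ τ₁ : ℝ) (hk : 0 < k₀) (hτ : τ₀ < τ₁) (V V' : ℝ → ℝ)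
    (hV : ∀ τ ∈ Set.Icc τ₀ τ₁, HasDerivWithinAt V (V' τ) (Set.Icc τ₀ τ₁) τ)
    (hV' : ContinuousOn V' (Set.Icc τ₀ τ₁)) (hV0 : V τ₀ = 0)
    (χ χ' : ℝ → ℂ)
    (hχ : ∀ τ ∈ Set.Icc τ₀ τ₁, HasDerivWithinAt χ (χ' τ) (Set.Icc τ₀ τ₁) τ)
    (hχ' : ∀ τ ∈ Set.Icc τ₀ τ₁,
      HasDerivWithinAt χ' (-(((k₀ ^ 2 + V τ : ℝ)) : ℂ) * χ τ) (Set.Icc τ₀ τ₁) τ)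
    (hi0 : χ τ₀ = Complex.exp (Complex.I * k₀ * τ₀) / (Real.sqrt (2 * k₀) : ℂ))
    (hi1 : χ' τ₀ = Complex.I * k₀ * Complex.exp (Complex.I * k₀ * τ₀) / (Real.sqrt (2 * k₀) : ℂ)) :
    ∀ τ ∈ Set.Icc τ₀ τ₁,
      ‖χ τ - Complex.exp (Complex.I * k₀ * τ) / (Real.sqrt (2 * k₀) : ℂ)‖
        ≤ ((∫ η in τ₀..τ, |V η|) / (Real.sqrt 2 * k₀ ^ ((3:ℝ) / 2))) *
            Real.exp ((∫ η in τ₀..τ, |V η|) / k₀) ∧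
      ‖χ' τ -
          Complex.I * k₀ * Complex.exp (Complex.I * k₀ * τ) / (Real.sqrt (2 * k₀) : ℂ)‖
        ≤ ((∫ η in τ₀..τ, |V η|) / Real.sqrt (2 * k₀) +
              (∫ η in τ₀..τ, |V' η|) / (Real.sqrt 2 * k₀ ^ ((3:ℝ) / 2))) *
            Real.exp (2 * (∫ η in τ₀..τ, |V η|) / k₀) :=
  stmt18_general k₀ τ₀ τ₁ hk V V' hV χ χ' hχ hχ' hi0 hi1
end
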